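/- arXiv:hep-th/0207225 — 3 statements merged into one kernel-verified Lean document; each statement's English description precedes it below -/
import Mathlib

section
/- For the Rosen-form plane-wave metric, every component of the Ricci tensor except R_{11} (the vv-component) vanishes identically on ℝ^n: R_{00} = 0, R_{01} = R_{10} = 0, R_{0i} = R_{i0} = 0, R_{1i} = R_{i1} = 0 and R_{ij} = 0 for all transverse indices i, j. -/
noncomputable section

/-- Partial derivative of a function on `ℝ^n` in the `μ`-th coordinate direction. -/
def pd {n : ℕ} (μ : Fin n) (f : (Fin n → ℝ) → ℝ) : (Fin n → ℝ) → ℝ :=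
  fun p => fderiv ℝ f p (Pi.single μ 1)

/-- Embedding of a transverse index `i ∈ {0,…,m-1}` as the coordinate index `i+2`. -/
def tIdx {m : ℕ} (i : Fin m) : Fin (m + 2) := i.succ.succ

/-- Covariant components `g_{αβ}` of the Rosen-form plane-wave metric:
`g_{01} = g_{10} = 1`, `g_{ij} = G(v)_{ij}`, all other components zero. -/
def gLowR (m : ℕ) (G : ℝ → Fin m → Fin m → ℝ)
    (p : Fin (m + 2) → ℝ) (α β : Fin (m + 2)) : ℝ :=
  (if (α = 0 ∧ β = 1) ∨ (α = 1 ∧ β = 0) then 1 else 0)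
    + ∑ i : Fin m, ∑ j : Fin m, if α = tIdx i ∧ β = tIdx j then G (p 1) i j else 0

/-- Contravariant components `g^{αβ}` of the Rosen-form plane-wave metric:
`g^{01} = g^{10} = 1`, `g^{ij} = (G(v)⁻¹)_{ij}`, all other components zero. -/
def gUpR (m : ℕ) (Ginv : ℝ → Fin m → Fin m → ℝ)
    (p : Fin (m + 2) → ℝ) (α β : Fin (m + 2)) : ℝ :=
  (if (α = 0 ∧ β = 1) ∨ (α = 1 ∧ β = 0) then 1 else 0)
    + ∑ i : Fin m, ∑ j : Fin m, if α = tIdx i ∧ β = tIdx j then Ginv (p 1) i j else 0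

/-- Christoffel symbols `Γ^α_{βγ}` of the Rosen-form metric. -/
def chrR (m : ℕ) (G Ginv : ℝ → Fin m → Fin m → ℝ)
    (p : Fin (m + 2) → ℝ) (α β γ : Fin (m + 2)) : ℝ :=
  (1 / 2) * ∑ δ : Fin (m + 2), gUpR m Ginv p α δ *
    (pd β (fun q => gLowR m G q δ γ) p + pd γ (fun q => gLowR m G q δ β) p
      - pd δ (fun q => gLowR m G q β γ) p)

/-- Riemann curvature tensor `R^α_{βγδ}` of the Rosen-form metric. -/
def riemR (m : ℕ) (G Ginv : ℝ → Fin m → Fin m → ℝ)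
    (p : Fin (m + 2) → ℝ) (α β γ δ : Fin (m + 2)) : ℝ :=
  pd γ (fun q => chrR m G Ginv q α δ β) p - pd δ (fun q => chrR m G Ginv q α γ β) p
    + ∑ ε : Fin (m + 2), (chrR m G Ginv p α γ ε * chrR m G Ginv p ε δ β
      - chrR m G Ginv p α δ ε * chrR m G Ginv p ε γ β)

/-- Ricci tensor `R_{βδ}` of the Rosen-form metric. -/
def ricciR (m : ℕ) (G Ginv : ℝ → Fin m → Fin m → ℝ)
    (p : Fin (m + 2) → ℝ) (β δ : Fin (m + 2)) : ℝ :=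
  ∑ α : Fin (m + 2), riemR m G Ginv p α β α δ

-- ==================== auxiliary development ====================

lemma zero_ne_tIdx {m : ℕ} (i : Fin m) : (0 : Fin (m+2)) ≠ tIdx i := by
  intro h
  have := congrArg Fin.val h
  simp [tIdx] at this

lemma one_ne_tIdx {m : ℕ} (i : Fin m) : (1 : Fin (m+2)) ≠ tIdx i := by
  intro h
  have := congrArg Fin.val h
  simp [tIdx] at this

lemma fzero_ne_one {m : ℕ} : (0 : Fin (m+2)) ≠ 1 := by
  intro h
  have := congrArg Fin.val h
  simp at this

/-- derivative matrix entries summed against index conditions -/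
def SG (m : ℕ) (G : ℝ → Fin m → Fin m → ℝ) (α β : Fin (m+2)) (v : ℝ) : ℝ :=
  ∑ i : Fin m, ∑ j : Fin m,
    if α = tIdx i ∧ β = tIdx j then deriv (fun w => G w i j) v else 0

lemma SG_zero {m : ℕ} {G : ℝ → Fin m → Fin m → ℝ} {a b : Fin (m+2)} {v : ℝ}
    (h : a = 0 ∨ a = 1 ∨ b = 0 ∨ b = 1) : SG m G a b v = 0 := by
  unfold SG
  apply Finset.sum_eq_zero; intro i _
  apply Finset.sum_eq_zero; intro j _
  rw [if_neg]
  rintro ⟨h1, h2⟩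
  rcases h with rfl | rfl | rfl | rfl
  · exact zero_ne_tIdx i h1
  · exact one_ne_tIdx i h1
  · exact zero_ne_tIdx j h2
  · exact one_ne_tIdx j h2

def gUpV (m : ℕ) (Ginv : ℝ → Fin m → Fin m → ℝ) (v : ℝ) (α β : Fin (m+2)) : ℝ :=
  gUpR m Ginv (fun _ => v) α β

lemma gUpV_one {m : ℕ} {Ginv : ℝ → Fin m → Fin m → ℝ} {v : ℝ} (δ : Fin (m+2)) :
    gUpV m Ginv v 1 δ = if δ = 0 then 1 else 0 := by
  simp [gUpV, gUpR, one_ne_tIdx, (fzero_ne_one (m := m)).symm]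

lemma gUpV_zero {m : ℕ} {Ginv : ℝ → Fin m → Fin m → ℝ} {v : ℝ} (δ : Fin (m+2)) :
    gUpV m Ginv v 0 δ = if δ = 1 then 1 else 0 := by
  simp [gUpV, gUpR, zero_ne_tIdx, fzero_ne_one]

lemma gUpV_t_one {m : ℕ} {Ginv : ℝ → Fin m → Fin m → ℝ} {v : ℝ} {α : Fin (m+2)}
    (hα0 : α ≠ 0) (hα1 : α ≠ 1) : gUpV m Ginv v α 1 = 0 := by
  simp [gUpV, gUpR, hα0, hα1, one_ne_tIdx]

/-- closed form for Christoffel symbols as a function of the `v`-coordinate alone -/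
def chrV (m : ℕ) (G Ginv : ℝ → Fin m → Fin m → ℝ) (v : ℝ) (α β γ : Fin (m+2)) : ℝ :=
  (1 / 2) * ∑ δ : Fin (m+2), gUpV m Ginv v α δ *
    ((if β = 1 then SG m G δ γ v else 0) + (if γ = 1 then SG m G δ β v else 0)
      - (if δ = 1 then SG m G β γ v else 0))

lemma pd_gLow (m : ℕ) (G : ℝ → Fin m → Fin m → ℝ)
    (hG : ∀ i j : Fin m, ContDiff ℝ (⊤ : ℕ∞) (fun v => G v i j))
    (μ α β : Fin (m+2)) (p : Fin (m+2) → ℝ) :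
    pd μ (fun q => gLowR m G q α β) p = if μ = 1 then SG m G α β (p 1) else 0 := by
  have hΦ : HasDerivAt
      (fun v : ℝ => ∑ i : Fin m, ∑ j : Fin m,
        if α = tIdx i ∧ β = tIdx j then G v i j else 0)
      (SG m G α β (p 1)) (p 1) := by
    unfold SG
    apply HasDerivAt.fun_sum
    intro i _
    apply HasDerivAt.fun_sum
    intro j _
    by_cases h : α = tIdx i ∧ β = tIdx j
    · simp only [if_pos h]
      exact (((hG i j).differentiable (by simp)) (p 1)).hasDerivAt
    · simp only [if_neg h]
      exact hasDerivAt_const _ _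
  have hL : HasFDerivAt (fun q : Fin (m+2) → ℝ => q 1)
      (ContinuousLinearMap.proj 1 : (Fin (m+2) → ℝ) →L[ℝ] ℝ) p :=
    (ContinuousLinearMap.proj (R := ℝ) (φ := fun _ : Fin (m+2) => ℝ) 1).hasFDerivAt
  have hcomp := hΦ.comp_hasFDerivAt p hL
  have hF : HasFDerivAt (fun q => gLowR m G q α β)
      ((SG m G α β (p 1)) • (ContinuousLinearMap.proj 1 : (Fin (m+2) → ℝ) →L[ℝ] ℝ)) p := by
    have he : (fun q => gLowR m G q α β)
        = fun q : Fin (m+2) → ℝ =>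
          (if (α = 0 ∧ β = 1) ∨ (α = 1 ∧ β = 0) then (1:ℝ) else 0)
          + (∑ i : Fin m, ∑ j : Fin m,
              if α = tIdx i ∧ β = tIdx j then G (q 1) i j else 0) := rfl
    rw [he]
    exact hcomp.const_add _
  show fderiv ℝ (fun q => gLowR m G q α β) p (Pi.single μ 1) = _
  rw [hF.fderiv]
  rw [ContinuousLinearMap.smul_apply, ContinuousLinearMap.proj_apply]
  by_cases hμ : μ = 1
  · subst hμ
    rw [if_pos rfl, Pi.single_eq_same]
    simp
  · rw [if_neg hμ, Pi.single_eq_of_ne (Ne.symm hμ)]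
    simp

lemma chr_eq (m : ℕ) (G Ginv : ℝ → Fin m → Fin m → ℝ)
    (hG : ∀ i j : Fin m, ContDiff ℝ (⊤ : ℕ∞) (fun v => G v i j))
    (p : Fin (m+2) → ℝ) (α β γ : Fin (m+2)) :
    chrR m G Ginv p α β γ = chrV m G Ginv (p 1) α β γ := by
  unfold chrR chrV
  congr 1
  apply Finset.sum_congr rfl
  intro d _
  rw [pd_gLow m G hG, pd_gLow m G hG, pd_gLow m G hG]
  rfl

lemma pd_zero_fn {m : ℕ} (F : (Fin (m+2) → ℝ) → ℝ) (hF : ∀ q, F q = 0)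
    (μ : Fin (m+2)) (p : Fin (m+2) → ℝ) : pd μ F p = 0 := by
  have : F = fun _ => (0:ℝ) := funext hF
  rw [this]
  show fderiv ℝ (fun _ : Fin (m+2) → ℝ => (0:ℝ)) p (Pi.single μ 1) = 0
  rw [fderiv_fun_const]
  simp

lemma pd_vdep {m : ℕ} (Φ : ℝ → ℝ) (μ : Fin (m+2)) (hμ : μ ≠ 1) (p : Fin (m+2) → ℝ) :
    pd μ (fun q => Φ (q 1)) p = 0 := by
  have hA : DifferentiableAt ℝ (fun v : ℝ => Function.update p 1 v) (p 1) := by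
    rw [differentiableAt_pi]
    intro i
    simp only [Function.update_apply]
    by_cases h : i = 1
    · simp only [if_pos h]
      exact differentiableAt_id
    · simp only [if_neg h]
      exact differentiableAt_const _
  by_cases hd : DifferentiableAt ℝ Φ (p 1)
  · have h1 : HasFDerivAt (fun q : Fin (m+2) → ℝ => Φ (q 1))
        ((deriv Φ (p 1)) • (ContinuousLinearMap.proj 1 : (Fin (m+2) → ℝ) →L[ℝ] ℝ)) p :=
      hd.hasDerivAt.comp_hasFDerivAt p
        (ContinuousLinearMap.proj (R := ℝ) (φ := fun _ : Fin (m+2) => ℝ) 1).hasFDerivAt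
    show fderiv ℝ (fun q : Fin (m+2) → ℝ => Φ (q 1)) p (Pi.single μ 1) = 0
    rw [h1.fderiv, ContinuousLinearMap.smul_apply, ContinuousLinearMap.proj_apply,
      Pi.single_eq_of_ne (Ne.symm hμ)]
    simp
  · have hnd : ¬ DifferentiableAt ℝ (fun q : Fin (m+2) → ℝ => Φ (q 1)) p := by
      intro hc
      apply hd
      have he : Φ = fun v => (fun q : Fin (m+2) → ℝ => Φ (q 1)) (Function.update p 1 v) := by
        funext v
        simp
      rw [he]
      have hg : DifferentiableAt ℝ (fun q : Fin (m+2) → ℝ => Φ (q 1))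
          (Function.update p 1 (p 1)) := by
        rw [Function.update_eq_self]
        exact hc
      exact hg.comp (p 1) hA
    show fderiv ℝ (fun q : Fin (m+2) → ℝ => Φ (q 1)) p (Pi.single μ 1) = 0
    rw [fderiv_zero_of_not_differentiableAt hnd]
    simp

-- vanishing patterns of chrV
lemma chrV_alpha_one {m : ℕ} {G Ginv : ℝ → Fin m → Fin m → ℝ} {v : ℝ} (b c : Fin (m+2)) :
    chrV m G Ginv v 1 b c = 0 := by
  unfold chrV
  rw [Finset.sum_eq_zero, mul_zero]
  intro d _
  rw [gUpV_one]
  by_cases hd : d = 0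
  · subst hd
    rw [if_pos rfl, one_mul]
    have e1 : SG m G (0 : Fin (m+2)) c v = 0 := SG_zero (Or.inl rfl)
    have e2 : SG m G (0 : Fin (m+2)) b v = 0 := SG_zero (Or.inl rfl)
    rw [e1, e2, if_neg (fzero_ne_one (m := m))]
    simp
  · rw [if_neg hd, zero_mul]

lemma chrV_b_zero {m : ℕ} {G Ginv : ℝ → Fin m → Fin m → ℝ} {v : ℝ} (a c : Fin (m+2)) :
    chrV m G Ginv v a 0 c = 0 := by
  unfold chrV
  rw [Finset.sum_eq_zero, mul_zero]
  intro d _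
  have e1 : SG m G d (0 : Fin (m+2)) v = 0 := SG_zero (Or.inr (Or.inr (Or.inl rfl)))
  have e2 : SG m G (0 : Fin (m+2)) c v = 0 := SG_zero (Or.inl rfl)
  rw [if_neg (fzero_ne_one (m := m)), e1, e2]
  simp

lemma chrV_c_zero {m : ℕ} {G Ginv : ℝ → Fin m → Fin m → ℝ} {v : ℝ} (a b : Fin (m+2)) :
    chrV m G Ginv v a b 0 = 0 := by
  unfold chrV
  rw [Finset.sum_eq_zero, mul_zero]
  intro d _
  have e1 : SG m G d (0 : Fin (m+2)) v = 0 := SG_zero (Or.inr (Or.inr (Or.inl rfl)))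
  have e2 : SG m G b (0 : Fin (m+2)) v = 0 := SG_zero (Or.inr (Or.inr (Or.inl rfl)))
  rw [if_neg (fzero_ne_one (m := m)), e1, e2]
  simp

lemma chrV_trans {m : ℕ} {G Ginv : ℝ → Fin m → Fin m → ℝ} {v : ℝ} {a b c : Fin (m+2)}
    (ha0 : a ≠ 0) (ha1 : a ≠ 1) (hb : b ≠ 1) (hc : c ≠ 1) :
    chrV m G Ginv v a b c = 0 := by
  unfold chrV
  rw [Finset.sum_eq_zero, mul_zero]
  intro d _
  by_cases hd : d = 1
  · subst hd
    rw [gUpV_t_one ha0 ha1, zero_mul]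
  · rw [if_neg hb, if_neg hc, if_neg hd]
    simp

/-- for the Rosen-form plane-wave metric, every component of the Ricci
tensor except the `vv`-component `R_{11}` vanishes identically. -/
theorem stmt16 (m : ℕ) (hm : 1 ≤ m) (G Ginv : ℝ → Fin m → Fin m → ℝ)
    (hGsmooth : ∀ i j : Fin m, ContDiff ℝ (⊤ : ℕ∞) (fun v => G v i j))
    (hGsymm : ∀ (v : ℝ) (i j : Fin m), G v i j = G v j i)
    (hGinv : ∀ (v : ℝ) (i j : Fin m),
      ∑ k : Fin m, G v i k * Ginv v k j = if i = j then 1 else 0)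
    (hGinv' : ∀ (v : ℝ) (i j : Fin m),
      ∑ k : Fin m, Ginv v i k * G v k j = if i = j then 1 else 0) :
    ∀ (p : Fin (m + 2) → ℝ) (β δ : Fin (m + 2)),
      ¬(β = 1 ∧ δ = 1) → ricciR m G Ginv p β δ = 0 := by
  intro p β δ hβδ
  have hce : ∀ (q : Fin (m+2) → ℝ) (a b c : Fin (m+2)),
      chrR m G Ginv q a b c = chrV m G Ginv (q 1) a b c :=
    fun q a b c => chr_eq m G Ginv hGsmooth q a b c
  unfold ricciR riemR
  apply Finset.sum_eq_zero
  intro α _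
  have h1 : pd α (fun q => chrR m G Ginv q α δ β) p = 0 := by
    by_cases hα : α = 1
    · subst hα
      apply pd_zero_fn
      intro q
      rw [hce]
      exact chrV_alpha_one δ β
    · have he : (fun q => chrR m G Ginv q α δ β)
          = fun q : Fin (m+2) → ℝ => chrV m G Ginv (q 1) α δ β :=
        funext fun q => hce q α δ β
      rw [he]
      exact pd_vdep (fun v => chrV m G Ginv v α δ β) α hα p
  have h2 : pd δ (fun q => chrR m G Ginv q α α β) p = 0 := by
    by_cases hβ : β = 1
    · have hδ : δ ≠ 1 := fun h => hβδ ⟨hβ, h⟩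
      have he : (fun q => chrR m G Ginv q α α β)
          = fun q : Fin (m+2) → ℝ => chrV m G Ginv (q 1) α α β :=
        funext fun q => hce q α α β
      rw [he]
      exact pd_vdep (fun v => chrV m G Ginv v α α β) δ hδ p
    · apply pd_zero_fn
      intro q
      rw [hce]
      rcases eq_or_ne α 0 with rfl | h0
      · exact chrV_b_zero 0 β
      rcases eq_or_ne α 1 with rfl | h1'
      · exact chrV_alpha_one 1 β
      · exact chrV_trans h0 h1' h1' hβ
  have h3 : ∀ ε ∈ (Finset.univ : Finset (Fin (m+2))),
      chrR m G Ginv p α α ε * chrR m G Ginv p ε δ β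
        - chrR m G Ginv p α δ ε * chrR m G Ginv p ε α β = 0 := by
    intro ε _
    have hA : chrR m G Ginv p α α ε * chrR m G Ginv p ε δ β = 0 := by
      by_cases hε : ε = 1
      · subst hε
        rw [hce p (1:Fin (m+2)) δ β, chrV_alpha_one, mul_zero]
      · have : chrR m G Ginv p α α ε = 0 := by
          rw [hce]
          rcases eq_or_ne α 0 with rfl | h0
          · exact chrV_b_zero 0 ε
          rcases eq_or_ne α 1 with rfl | h1'
          · exact chrV_alpha_one 1 ε
          · exact chrV_trans h0 h1' h1' hε
        rw [this, zero_mul]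
    have hB : chrR m G Ginv p α δ ε * chrR m G Ginv p ε α β = 0 := by
      by_cases hε0 : ε = 0
      · subst hε0
        rw [hce p α δ (0:Fin (m+2)), chrV_c_zero, zero_mul]
      by_cases hε1 : ε = 1
      · subst hε1
        rw [hce p (1:Fin (m+2)) α β, chrV_alpha_one, mul_zero]
      by_cases hα0 : α = 0
      · subst hα0
        rw [hce p ε (0:Fin (m+2)) β, chrV_b_zero, mul_zero]
      by_cases hα1 : α = 1
      · subst hα1
        rw [hce p (1:Fin (m+2)) δ ε, chrV_alpha_one, zero_mul]
      by_cases hδ1 : δ = 1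
      · have hβ1 : β ≠ 1 := fun h => hβδ ⟨h, hδ1⟩
        rw [hce p ε α β, chrV_trans hε0 hε1 hα1 hβ1, mul_zero]
      · rw [hce p α δ ε, chrV_trans hα0 hα1 hδ1 hε1, zero_mul]
    rw [hA, hB, sub_zero]
  rw [h1, h2, Finset.sum_eq_zero h3]
  ring
end
end

section
/- For the Rosen-form plane-wave metric, the vv-component of the Ricci tensor is given at every point by R_{11} = −(1/2) Tr(G(v)^{-1} G''(v)) + (1/4) Tr((G(v)^{-1} G'(v))²), where G' and G'' denote the first and second derivatives of the matrix-valued function G. In particular the vacuum Einstein equations for this metric reduce to the single condition −(1/2) Tr(G^{-1} G'') + (1/4) Tr((G^{-1} G')²) = 0. -/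
noncomputable section

namespace RW
variable {m : ℕ}

lemma tIdx_ne_zero (i : Fin m) : tIdx i ≠ 0 := by simp [tIdx, Fin.ext_iff]
lemma tIdx_ne_one (i : Fin m) : tIdx i ≠ 1 := by simp [tIdx, Fin.ext_iff]
lemma tIdx_inj {i j : Fin m} : tIdx i = tIdx j ↔ i = j := by simp [tIdx, Fin.ext_iff]

lemma sum_split (f : Fin (m+2) → ℝ) :
    ∑ δ : Fin (m+2), f δ = f 0 + f 1 + ∑ k : Fin m, f (tIdx k) := by
  rw [Fin.sum_univ_succ, Fin.sum_univ_succ]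
  have h1 : (0 : Fin (m+1)).succ = (1 : Fin (m+2)) := rfl
  simp only [h1, tIdx, add_assoc]

lemma pd_comp {p : Fin (m+2) → ℝ} (f : ℝ → ℝ) (hf : DifferentiableAt ℝ f (p 1)) (μ : Fin (m+2)) :
    pd μ (fun q => f (q 1)) p = if μ = 1 then deriv f (p 1) else 0 := by
  have hd : fderiv ℝ (fun q : Fin (m+2) → ℝ => f (q 1)) p =
      (fderiv ℝ f (p 1)).comp (ContinuousLinearMap.proj (R := ℝ) (φ := fun _ : Fin (m+2) => ℝ) 1) :=
    fderiv_comp (𝕜 := ℝ)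
      (g := f) (f := fun q : Fin (m+2) → ℝ => (ContinuousLinearMap.proj (R := ℝ) (φ := fun _ : Fin (m+2) => ℝ) 1) q)
      p hf ((ContinuousLinearMap.proj (R := ℝ) (φ := fun _ : Fin (m+2) => ℝ) 1).differentiableAt)
      |>.trans (by rw [(ContinuousLinearMap.proj (R := ℝ) (φ := fun _ : Fin (m+2) => ℝ) 1).fderiv]; rfl)
  unfold pd
  rw [hd]
  simp only [ContinuousLinearMap.coe_comp', Function.comp_apply, ContinuousLinearMap.proj_apply]
  rcases eq_or_ne μ 1 with h | h
  · subst h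
    rw [Pi.single_eq_same, if_pos rfl, fderiv_apply_one_eq_deriv]
  · rw [Pi.single_eq_of_ne h.symm, (fderiv ℝ f (p 1)).map_zero, if_neg h]

variable (G Ginv : ℝ → Fin m → Fin m → ℝ)

def Gd (v : ℝ) (i j : Fin m) : ℝ := deriv (fun w => G w i j) v
def Mf (v : ℝ) (i j : Fin m) : ℝ := ∑ k : Fin m, Ginv v i k * Gd G v k j
def lift2 (f : ℝ → Fin m → Fin m → ℝ) (v : ℝ) (α γ : Fin (m+2)) : ℝ :=
  ∑ i : Fin m, ∑ j : Fin m, if α = tIdx i ∧ γ = tIdx j then f v i j else 0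

variable {f : ℝ → Fin m → Fin m → ℝ}

@[simp] lemma lift2_zero_left (v : ℝ) (γ : Fin (m+2)) : lift2 f v 0 γ = 0 := by
  simp [lift2, fun i => (tIdx_ne_zero (m := m) i).symm]
@[simp] lemma lift2_one_left (v : ℝ) (γ : Fin (m+2)) : lift2 f v 1 γ = 0 := by
  simp [lift2, fun i => (tIdx_ne_one (m := m) i).symm]
@[simp] lemma lift2_zero_right (v : ℝ) (α : Fin (m+2)) : lift2 f v α 0 = 0 := by
  simp [lift2, fun i => (tIdx_ne_zero (m := m) i).symm]
@[simp] lemma lift2_one_right (v : ℝ) (α : Fin (m+2)) : lift2 f v α 1 = 0 := by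
  simp [lift2, fun i => (tIdx_ne_one (m := m) i).symm]
@[simp] lemma lift2_tIdx (v : ℝ) (a b : Fin m) : lift2 f v (tIdx a) (tIdx b) = f v a b := by
  simp [lift2, tIdx_inj, ite_and, Finset.sum_ite_eq]

lemma lift2_differentiable (hf : ∀ i j, Differentiable ℝ (fun v => f v i j))
    (α γ : Fin (m+2)) : Differentiable ℝ (fun v => lift2 f v α γ) := by
  unfold lift2
  apply Differentiable.fun_sum; intro i _
  apply Differentiable.fun_sum; intro j _
  by_cases h : α = tIdx i ∧ γ = tIdx j <;> simp [h, hf i j]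

lemma lift2_deriv (hf : ∀ i j, Differentiable ℝ (fun v => f v i j))
    (α γ : Fin (m+2)) (v : ℝ) :
    deriv (fun w => lift2 f w α γ) v
      = lift2 (fun w i j => deriv (fun u => f u i j) w) v α γ := by
  have hif : ∀ (i j : Fin m), Differentiable ℝ
      (fun w => if α = tIdx i ∧ γ = tIdx j then f w i j else 0) := by
    intro i j; by_cases h : α = tIdx i ∧ γ = tIdx j <;> simp [h, hf i j]
  unfold lift2
  rw [deriv_fun_sum (fun i _ => (Differentiable.fun_sum (fun j _ => hif i j)).differentiableAt)]
  refine Finset.sum_congr rfl fun i _ => ?_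
  rw [deriv_fun_sum (fun j _ => (hif i j).differentiableAt)]
  refine Finset.sum_congr rfl fun j _ => ?_
  by_cases h : α = tIdx i ∧ γ = tIdx j <;> simp [h]

lemma contDiff_finset_prod {ι : Type*} (s : Finset ι) (f : ι → ℝ → ℝ)
    (h : ∀ i ∈ s, ContDiff ℝ (⊤ : ℕ∞) (f i)) : ContDiff ℝ (⊤ : ℕ∞) (fun v => ∏ i ∈ s, f i v) := by
  classical
  induction s using Finset.induction with
  | empty => simpa using contDiff_const
  | @insert a s hnot ih =>
    simp only [Finset.prod_insert hnot]
    exact (h a (Finset.mem_insert_self a s)).mul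
      (ih fun i hi => h i (Finset.mem_insert_of_mem hi))

lemma contDiff_det {k : ℕ} (A : ℝ → Matrix (Fin k) (Fin k) ℝ)
    (h : ∀ i j, ContDiff ℝ (⊤ : ℕ∞) fun v => A v i j) : ContDiff ℝ (⊤ : ℕ∞) fun v => (A v).det := by
  have hh : (fun v => (A v).det) = fun v => ∑ σ : Equiv.Perm (Fin k),
      ((Equiv.Perm.sign σ : ℤ) : ℝ) * ∏ i, A v (σ i) i := by
    funext v
    rw [Matrix.det_apply]
    exact Finset.sum_congr rfl fun σ _ => by simp [Units.smul_def, zsmul_eq_mul]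
  rw [hh]
  exact ContDiff.sum fun σ _ =>
    contDiff_const.mul (contDiff_finset_prod _ _ fun i _ => h (σ i) i)

lemma Ginv_smooth (hGsmooth : ∀ i j : Fin m, ContDiff ℝ (⊤ : ℕ∞) (fun v => G v i j))
    (hGinv : ∀ (v : ℝ) (i j : Fin m),
      ∑ k : Fin m, G v i k * Ginv v k j = if i = j then 1 else 0) :
    ∀ i j : Fin m, ContDiff ℝ (⊤ : ℕ∞) (fun v => Ginv v i j) := by
  intro i j
  have hmat : ∀ v, (Matrix.of fun a b => G v a b) * (Matrix.of fun a b => Ginv v a b) = 1 := by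
    intro v; ext a b
    simp [Matrix.mul_apply, hGinv v a b, Matrix.one_apply]
  have hdetne : ∀ v, (Matrix.of fun a b => G v a b).det ≠ 0 := fun v =>
    (Matrix.isUnit_det_of_right_inverse (hmat v)).ne_zero
  have hinv : ∀ v, Ginv v i j =
      ((Matrix.of fun a b => G v a b).det)⁻¹ * (Matrix.of fun a b => G v a b).adjugate i j := by
    intro v
    have h1 := Matrix.inv_eq_right_inv (hmat v)
    have : Ginv v i j = ((Matrix.of fun a b => G v a b)⁻¹) i j := by rw [h1]; rfl
    rw [this, Matrix.inv_def]
    simp [Ring.inverse_eq_inv, Matrix.smul_apply, smul_eq_mul]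
  have hdet : ContDiff ℝ (⊤ : ℕ∞) fun v => (Matrix.of fun a b => G v a b).det :=
    contDiff_det _ (fun a b => hGsmooth a b)
  have hadj : ContDiff ℝ (⊤ : ℕ∞) fun v => (Matrix.of fun a b => G v a b).adjugate i j := by
    simp only [Matrix.adjugate_apply]
    refine contDiff_det _ (fun a b => ?_)
    by_cases hab : a = j
    · simpa [Matrix.updateRow_apply, hab] using contDiff_const
    · simpa [Matrix.updateRow_apply, hab] using hGsmooth a b
  have h2 := (hdet.inv hdetne).mul hadj
  have h3 : (fun v => Ginv v i j) = fun v =>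
      ((Matrix.of fun a b => G v a b).det)⁻¹ * (Matrix.of fun a b => G v a b).adjugate i j :=
    funext hinv
  rw [h3]
  exact h2


lemma fin_zero_ne_one : (0 : Fin (m+2)) ≠ 1 := by simp [Fin.ext_iff]

lemma fin_cases3 (α : Fin (m+2)) : α = 0 ∨ α = 1 ∨ ∃ i : Fin m, α = tIdx i := by
  rcases α with ⟨a, ha⟩
  match a with
  | 0 => exact Or.inl rfl
  | 1 => exact Or.inr (Or.inl rfl)
  | (n+2) => exact Or.inr (Or.inr ⟨⟨n, by omega⟩, by simp [tIdx, Fin.ext_iff]⟩)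

lemma gUp_eq (p : Fin (m+2) → ℝ) (α δ : Fin (m+2)) :
    gUpR m Ginv p α δ = (if (α = 0 ∧ δ = 1) ∨ (α = 1 ∧ δ = 0) then 1 else 0)
      + lift2 Ginv (p 1) α δ := rfl

lemma gUp_at_zero (p : Fin (m+2) → ℝ) (α : Fin (m+2)) :
    gUpR m Ginv p α 0 = if α = 1 then 1 else 0 := by
  rw [gUp_eq, lift2_zero_right, add_zero]
  simp [fin_zero_ne_one (m := m)]

lemma gUp_at_one (p : Fin (m+2) → ℝ) (α : Fin (m+2)) :
    gUpR m Ginv p α 1 = if α = 0 then 1 else 0 := by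
  rw [gUp_eq, lift2_one_right, add_zero]
  simp [(fin_zero_ne_one (m := m)).symm]

lemma gUp_at_t (p : Fin (m+2) → ℝ) (α : Fin (m+2)) (k : Fin m) :
    gUpR m Ginv p α (tIdx k) = lift2 Ginv (p 1) α (tIdx k) := by
  rw [gUp_eq]
  simp [tIdx_ne_zero, tIdx_ne_one]

lemma pd_gLow (hGsmooth : ∀ i j : Fin m, ContDiff ℝ (⊤ : ℕ∞) (fun v => G v i j))
    (p : Fin (m+2) → ℝ) (μ δ γ : Fin (m+2)) :
    pd μ (fun q => gLowR m G q δ γ) p = if μ = 1 then lift2 (Gd G) (p 1) δ γ else 0 := by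
  have hGdiff : ∀ i j : Fin m, Differentiable ℝ (fun v => G v i j) :=
    fun i j => (hGsmooth i j).differentiable (by simp)
  have h0 : (fun q : Fin (m+2) → ℝ => gLowR m G q δ γ)
      = fun q => ((if (δ = 0 ∧ γ = 1) ∨ (δ = 1 ∧ γ = 0) then (1:ℝ) else 0) + lift2 G (q 1) δ γ) := rfl
  rw [h0]
  have hc := pd_comp (p := p)
    (f := fun v => (if (δ = 0 ∧ γ = 1) ∨ (δ = 1 ∧ γ = 0) then (1:ℝ) else 0) + lift2 G v δ γ)
    ((differentiableAt_const _).add ((lift2_differentiable hGdiff δ γ) (p 1))) μ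
  rw [hc]
  rcases eq_or_ne μ 1 with h | h
  · rw [if_pos h, if_pos h, deriv_const_add, lift2_deriv hGdiff]
    rfl
  · rw [if_neg h, if_neg h]

def chrC (v : ℝ) (α β γ : Fin (m+2)) : ℝ :=
  -(1/2) * (if α = 0 then lift2 (Gd G) v β γ else 0)
  + (1/2) * ((if β = 1 then lift2 (Mf G Ginv) v α γ else 0)
           + (if γ = 1 then lift2 (Mf G Ginv) v α β else 0))

lemma lift2_mul_sum (f g : ℝ → Fin m → Fin m → ℝ) (v : ℝ) (α γ : Fin (m+2)) :
    ∑ k : Fin m, lift2 f v α (tIdx k) * lift2 g v (tIdx k) γ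
      = lift2 (fun w i j => ∑ k : Fin m, f w i k * g w k j) v α γ := by
  rcases fin_cases3 α with h | h | ⟨a, h⟩ <;> subst h <;>
    rcases fin_cases3 γ with h' | h' | ⟨b, h'⟩ <;> subst h' <;> simp

lemma chrR_eq (hGsmooth : ∀ i j : Fin m, ContDiff ℝ (⊤ : ℕ∞) (fun v => G v i j))
    (p : Fin (m+2) → ℝ) (α β γ : Fin (m+2)) :
    chrR m G Ginv p α β γ = chrC G Ginv (p 1) α β γ := by
  have hpd : ∀ (μ δ γ' : Fin (m+2)), pd μ (fun q => gLowR m G q δ γ') p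
      = if μ = 1 then lift2 (Gd G) (p 1) δ γ' else 0 := pd_gLow G hGsmooth p
  simp only [chrR, hpd]
  rw [sum_split]
  rw [gUp_at_zero, gUp_at_one]
  simp only [gUp_at_t]
  have hms := lift2_mul_sum (m := m) Ginv (Gd G) (p 1)
  have hMf : (fun w i j => ∑ k : Fin m, Ginv w i k * Gd G w k j) = Mf G Ginv := rfl
  by_cases hβ : β = 1 <;> by_cases hγ : γ = 1 <;> by_cases hα : α = 0 <;>
    simp [chrC, hβ, hγ, hα, fin_zero_ne_one (m := m), (fin_zero_ne_one (m := m)).symm,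
      tIdx_ne_zero, tIdx_ne_one, mul_add, add_mul, Finset.sum_add_distrib, hms, hMf] <;>
    ring


def chrShape (A B : ℝ → Fin m → Fin m → ℝ) (v : ℝ) (α β γ : Fin (m+2)) : ℝ :=
  -(1/2) * (if α = 0 then lift2 A v β γ else 0)
  + (1/2) * ((if β = 1 then lift2 B v α γ else 0) + (if γ = 1 then lift2 B v α β else 0))

lemma chrC_eq_shape (v : ℝ) (α β γ : Fin (m+2)) :
    chrC G Ginv v α β γ = chrShape (Gd G) (Mf G Ginv) v α β γ := rfl

def Mf2 (v : ℝ) (i j : Fin m) : ℝ := deriv (fun w => Mf G Ginv w i j) v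
def Gd2 (v : ℝ) (i j : Fin m) : ℝ := deriv (fun w => Gd G w i j) v

-- evaluation lemmas for chrShape
variable {A B : ℝ → Fin m → Fin m → ℝ}

@[simp] lemma chrShape_one (v : ℝ) (β γ : Fin (m+2)) :
    chrShape A B v 1 β γ = 0 := by
  simp [chrShape, (fin_zero_ne_one (m := m)).symm]

@[simp] lemma chrShape_zero (v : ℝ) (β γ : Fin (m+2)) :
    chrShape A B v 0 β γ = -(1/2) * lift2 A v β γ := by
  simp [chrShape]

@[simp] lemma chrShape_t (v : ℝ) (i : Fin m) (β γ : Fin (m+2)) :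
    chrShape A B v (tIdx i) β γ
      = (1/2) * ((if β = 1 then lift2 B v (tIdx i) γ else 0)
               + (if γ = 1 then lift2 B v (tIdx i) β else 0)) := by
  simp [chrShape, tIdx_ne_zero]

lemma chrShape_diag_sum (v : ℝ) (β : Fin (m+2)) :
    ∑ α : Fin (m+2), chrShape A B v α α β
      = if β = 1 then (1/2) * ∑ i : Fin m, B v i i else 0 := by
  rw [sum_split]
  by_cases hβ : β = 1 <;>
    simp [hβ, tIdx_ne_one, (fin_zero_ne_one (m := m)), (fin_zero_ne_one (m := m)).symm,
      Finset.mul_sum]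

@[simp] lemma chrShape_mid0 (v : ℝ) (ε γ : Fin (m+2)) :
    chrShape A B v ε 0 γ = 0 := by
  simp [chrShape, (fin_zero_ne_one (m := m)).symm]

@[simp] lemma chrShape_r0 (v : ℝ) (ε β : Fin (m+2)) :
    chrShape A B v ε β 0 = 0 := by
  simp [chrShape, (fin_zero_ne_one (m := m)).symm]

lemma chrShape_sq_sum (v : ℝ) (δ β : Fin (m+2)) :
    ∑ α : Fin (m+2), ∑ ε : Fin (m+2), chrShape A B v α δ ε * chrShape A B v ε α β
      = if δ = 1 ∧ β = 1
          then (1/4) * ∑ i : Fin m, ∑ j : Fin m, B v i j * B v j i else 0 := by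
  simp only [sum_split]
  simp only [chrShape_one, chrShape_zero, chrShape_mid0, chrShape_r0, chrShape_t,
    lift2_zero_left, lift2_zero_right, lift2_one_left, lift2_one_right, lift2_tIdx,
    tIdx_ne_one, tIdx_ne_zero, mul_zero, zero_mul, Finset.sum_const_zero, add_zero, zero_add,
    if_false]
  by_cases hδ : δ = 1 <;> by_cases hβ : β = 1 <;>
    simp [hδ, hβ, Finset.mul_sum, Finset.sum_const_zero] <;>
    (try (refine Finset.sum_congr rfl fun i _ => ?_;
          refine Finset.sum_congr rfl fun j _ => ?_; ring))


lemma chrShape_mix_sum (v : ℝ) (δ β : Fin (m+2)) :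
    ∑ α : Fin (m+2), ∑ ε : Fin (m+2),
      chrShape A B v α α ε * chrShape A B v ε δ β = 0 := by
  rw [Finset.sum_comm]
  have h1 : ∀ ε : Fin (m+2), ∑ α : Fin (m+2), chrShape A B v α α ε * chrShape A B v ε δ β
      = (if ε = 1 then (1/2) * ∑ i : Fin m, B v i i else 0) * chrShape A B v ε δ β := by
    intro ε
    rw [← Finset.sum_mul, chrShape_diag_sum]
  simp only [h1]
  rw [sum_split]
  simp [tIdx_ne_one, (fin_zero_ne_one (m := m))]

section Smooth
open scoped ContDiff
variable (hGs : ∀ i j : Fin m, ContDiff ℝ (⊤ : ℕ∞) fun v => G v i j)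
  (hGi : ∀ i j : Fin m, ContDiff ℝ (⊤ : ℕ∞) fun v => Ginv v i j)

lemma one_le_infty : (1 : WithTop ℕ∞) ≤ ∞ := by exact_mod_cast (le_top : (1:ℕ∞) ≤ ⊤)

include hGs in
lemma Gd_contDiff : ∀ i j : Fin m, ContDiff ℝ ∞ fun v => Gd G v i j := fun i j =>
  (contDiff_infty_iff_deriv.mp ((hGs i j).of_le (by simp))).2

include hGs hGi in
lemma Mf_contDiff : ∀ i j : Fin m, ContDiff ℝ ∞ fun v => Mf G Ginv v i j := by
  intro i j
  have : ContDiff ℝ ∞ fun v => ∑ k : Fin m, Ginv v i k * Gd G v k j :=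
    ContDiff.sum fun k _ => ((hGi i k).of_le (by simp)).mul (Gd_contDiff G hGs k j)
  exact this

lemma hasDerivAt_if (c : Prop) [Decidable c] (F F' : ℝ → ℝ) (v : ℝ) (h : HasDerivAt F (F' v) v) :
    HasDerivAt (fun w => if c then F w else 0) (if c then F' v else 0) v := by
  by_cases hc : c
  · simpa [hc] using h
  · simpa [hc] using hasDerivAt_const v (0:ℝ)

include hGs hGi in
lemma chrC_hasDerivAt (v : ℝ) (α β γ : Fin (m+2)) :
    HasDerivAt (fun w => chrC G Ginv w α β γ)
      (chrShape (Gd2 G) (Mf2 G Ginv) v α β γ) v := by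
  have hGdd : ∀ i j : Fin m, Differentiable ℝ fun v => Gd G v i j :=
    fun i j => (Gd_contDiff G hGs i j).differentiable (by simp)
  have hMfd : ∀ i j : Fin m, Differentiable ℝ fun v => Mf G Ginv v i j :=
    fun i j => (Mf_contDiff G Ginv hGs hGi i j).differentiable (by simp)
  have hA : ∀ (x y : Fin (m+2)), HasDerivAt (fun w => lift2 (Gd G) w x y)
      (lift2 (Gd2 G) v x y) v := by
    intro x y
    have hd := (lift2_differentiable hGdd x y v).hasDerivAt
    rw [lift2_deriv hGdd x y v] at hd
    exact hd
  have hB : ∀ (x y : Fin (m+2)), HasDerivAt (fun w => lift2 (Mf G Ginv) w x y)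
      (lift2 (Mf2 G Ginv) v x y) v := by
    intro x y
    have hd := (lift2_differentiable hMfd x y v).hasDerivAt
    rw [lift2_deriv hMfd x y v] at hd
    exact hd
  have h1 := hasDerivAt_if (α = 0) (fun w => lift2 (Gd G) w β γ)
    (fun w => lift2 (Gd2 G) w β γ) v (hA β γ)
  have h2 := hasDerivAt_if (β = 1) (fun w => lift2 (Mf G Ginv) w α γ)
    (fun w => lift2 (Mf2 G Ginv) w α γ) v (hB α γ)
  have h3 := hasDerivAt_if (γ = 1) (fun w => lift2 (Mf G Ginv) w α β)
    (fun w => lift2 (Mf2 G Ginv) w α β) v (hB α β)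
  exact (h1.const_mul (-(1/2))).add ((h2.add h3).const_mul (1/2))

include hGs hGi in
lemma pd_chr (p : Fin (m+2) → ℝ) (μ α β γ : Fin (m+2)) :
    pd μ (fun q => chrR m G Ginv q α β γ) p
      = if μ = 1 then chrShape (Gd2 G) (Mf2 G Ginv) (p 1) α β γ else 0 := by
  have h0 : (fun q : Fin (m+2) → ℝ => chrR m G Ginv q α β γ)
      = fun q => chrC G Ginv (q 1) α β γ :=
    funext fun q => chrR_eq G Ginv (fun i j => hGs i j) q α β γ
  rw [h0, pd_comp (f := fun v => chrC G Ginv v α β γ)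
    (chrC_hasDerivAt G Ginv hGs hGi (p 1) α β γ).differentiableAt μ,
    (chrC_hasDerivAt G Ginv hGs hGi (p 1) α β γ).deriv]

end Smooth


section Ricci
variable (hGs : ∀ i j : Fin m, ContDiff ℝ (⊤ : ℕ∞) fun v => G v i j)
  (hGi : ∀ i j : Fin m, ContDiff ℝ (⊤ : ℕ∞) fun v => Ginv v i j)

include hGs hGi in
lemma ricci_eq (p : Fin (m+2) → ℝ) (β δ : Fin (m+2)) :
    ricciR m G Ginv p β δ = if β = 1 ∧ δ = 1 then
      -(1/2) * (∑ i : Fin m, Mf2 G Ginv (p 1) i i)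
      - (1/4) * (∑ i : Fin m, ∑ j : Fin m, Mf G Ginv (p 1) i j * Mf G Ginv (p 1) j i)
      else 0 := by
  have hpd := pd_chr G Ginv hGs hGi p
  have hchr : ∀ α β γ : Fin (m+2), chrR m G Ginv p α β γ
      = chrShape (Gd G) (Mf G Ginv) (p 1) α β γ :=
    fun α β γ => (chrR_eq G Ginv (fun i j => hGs i j) p α β γ).trans
      (chrC_eq_shape G Ginv (p 1) α β γ)
  simp only [ricciR, riemR, hpd, hchr]
  rw [Finset.sum_add_distrib, Finset.sum_sub_distrib]
  simp only [Finset.sum_sub_distrib]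
  have h1 : ∑ α : Fin (m+2), (if α = 1 then chrShape (Gd2 G) (Mf2 G Ginv) (p 1) α δ β else 0)
      = 0 := by
    simp [Finset.sum_ite_eq']
  have h2 : ∑ α : Fin (m+2), (if δ = 1 then chrShape (Gd2 G) (Mf2 G Ginv) (p 1) α α β else 0)
      = if δ = 1 then (if β = 1 then (1/2) * ∑ i : Fin m, Mf2 G Ginv (p 1) i i else 0)
        else 0 := by
    by_cases hδ : δ = 1 <;> simp [hδ, chrShape_diag_sum]
  rw [h1, h2, chrShape_mix_sum, chrShape_sq_sum]
  by_cases hβ : β = 1 <;> by_cases hδ : δ = 1 <;> simp [hβ, hδ] <;> ring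

end Ricci


section Final
open scoped ContDiff
variable (hGs : ∀ i j : Fin m, ContDiff ℝ (⊤ : ℕ∞) fun v => G v i j)
  (hGi : ∀ i j : Fin m, ContDiff ℝ (⊤ : ℕ∞) fun v => Ginv v i j)

lemma sum3_rot (F : Fin m → Fin m → Fin m → ℝ) :
    ∑ k : Fin m, ∑ a : Fin m, ∑ b : Fin m, F k a b
      = ∑ k : Fin m, ∑ a : Fin m, ∑ b : Fin m, F b a k := by
  rw [Finset.sum_comm]
  rw [show (∑ a : Fin m, ∑ k : Fin m, ∑ b : Fin m, F k a b)
      = ∑ a : Fin m, ∑ b : Fin m, ∑ k : Fin m, F k a b from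
    Finset.sum_congr rfl fun a _ => Finset.sum_comm ..]
  rw [Finset.sum_comm]

include hGs hGi in
lemma deriv_Ginv
    (hGinv : ∀ (v : ℝ) (i j : Fin m),
      ∑ k : Fin m, G v i k * Ginv v k j = if i = j then 1 else 0)
    (hGinv' : ∀ (v : ℝ) (i j : Fin m),
      ∑ k : Fin m, Ginv v i k * G v k j = if i = j then 1 else 0)
    (v : ℝ) (i j : Fin m) :
    deriv (fun w => Ginv w i j) v
      = -∑ k : Fin m, ∑ l : Fin m, Ginv v i k * Gd G v k l * Ginv v l j := by
  have hGd : ∀ a b : Fin m, Differentiable ℝ (fun w => G w a b) :=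
    fun a b => (hGs a b).differentiable (by simp)
  have hGid : ∀ a b : Fin m, Differentiable ℝ (fun w => Ginv w a b) :=
    fun a b => (hGi a b).differentiable (by simp)
  have key : ∀ l : Fin m, ∑ k : Fin m, deriv (fun w => Ginv w i k) v * G v k l
      = -∑ k : Fin m, Ginv v i k * Gd G v k l := by
    intro l
    have hd : HasDerivAt (fun w => ∑ k : Fin m, Ginv w i k * G w k l)
        (∑ k : Fin m, (deriv (fun w => Ginv w i k) v * G v k l
          + Ginv v i k * Gd G v k l)) v := by
      apply HasDerivAt.fun_sum
      intro k _
      exact ((hGid i k v).hasDerivAt).mul ((hGd k l v).hasDerivAt)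
    have hc : (fun w => ∑ k : Fin m, Ginv w i k * G w k l)
        = fun _ => (if i = l then (1:ℝ) else 0) := funext fun w => hGinv' w i l
    have h0 : HasDerivAt (fun w => ∑ k : Fin m, Ginv w i k * G w k l) 0 v := by
      rw [hc]; exact hasDerivAt_const v _
    have := hd.unique h0
    rw [Finset.sum_add_distrib] at this
    linarith
  have e1 : ∑ l : Fin m, (∑ k : Fin m, deriv (fun w => Ginv w i k) v * G v k l) * Ginv v l j
      = deriv (fun w => Ginv w i j) v := by
    simp only [Finset.sum_mul]
    rw [Finset.sum_comm]
    have hrow : ∀ k : Fin m, ∑ l : Fin m, deriv (fun w => Ginv w i k) v * G v k l * Ginv v l j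
        = deriv (fun w => Ginv w i k) v * (if k = j then 1 else 0) := by
      intro k
      rw [← hGinv v k j, Finset.mul_sum]
      exact Finset.sum_congr rfl fun l _ => by ring
    simp only [hrow, mul_ite, mul_one, mul_zero]
    simp
  rw [← e1]
  simp only [key, neg_mul, Finset.sum_neg_distrib, Finset.sum_mul]
  rw [Finset.sum_comm]

end Final


section Final2
open scoped ContDiff
variable (hGs : ∀ i j : Fin m, ContDiff ℝ (⊤ : ℕ∞) fun v => G v i j)
  (hGi : ∀ i j : Fin m, ContDiff ℝ (⊤ : ℕ∞) fun v => Ginv v i j)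

lemma sum3_inner_out (X : Fin m → Fin m → Fin m → ℝ) :
    ∑ a : Fin m, ∑ b : Fin m, ∑ k : Fin m, X a b k
      = ∑ k : Fin m, ∑ a : Fin m, ∑ b : Fin m, X a b k := by
  rw [show (∑ a : Fin m, ∑ b : Fin m, ∑ k : Fin m, X a b k)
      = ∑ a : Fin m, ∑ k : Fin m, ∑ b : Fin m, X a b k from
    Finset.sum_congr rfl fun a _ => Finset.sum_comm ..]
  rw [Finset.sum_comm]

include hGs hGi in
lemma Mf2_eq (v : ℝ) (i j : Fin m) :
    Mf2 G Ginv v i j = ∑ k : Fin m,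
      (deriv (fun w => Ginv w i k) v * Gd G v k j + Ginv v i k * Gd2 G v k j) := by
  have hGid : ∀ a b : Fin m, Differentiable ℝ (fun w => Ginv w a b) :=
    fun a b => (hGi a b).differentiable (by simp)
  have hGdd : ∀ a b : Fin m, Differentiable ℝ (fun w => Gd G w a b) :=
    fun a b => (Gd_contDiff G hGs a b).differentiable (by simp)
  exact (HasDerivAt.fun_sum fun k _ =>
    ((hGid i k v).hasDerivAt.mul ((hGdd k j v).hasDerivAt))).deriv

lemma trMsq_expand (v : ℝ) :
    ∑ i : Fin m, ∑ j : Fin m, Mf G Ginv v i j * Mf G Ginv v j i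
      = ∑ i : Fin m, ∑ j : Fin m, ∑ k : Fin m, ∑ l : Fin m,
          Ginv v i j * Gd G v j k * Ginv v k l * Gd G v l i := by
  refine Finset.sum_congr rfl fun i _ => ?_
  have expand : ∀ j : Fin m, Mf G Ginv v i j * Mf G Ginv v j i
      = ∑ a : Fin m, ∑ b : Fin m, Ginv v i a * Gd G v a j * Ginv v j b * Gd G v b i := by
    intro j
    rw [Mf, Mf, Finset.sum_mul_sum]
    exact Finset.sum_congr rfl fun a _ => Finset.sum_congr rfl fun b _ => by ring
  simp only [expand]
  rw [Finset.sum_comm]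

include hGs hGi in
lemma trM2_eq
    (hGinv : ∀ (v : ℝ) (i j : Fin m),
      ∑ k : Fin m, G v i k * Ginv v k j = if i = j then 1 else 0)
    (hGinv' : ∀ (v : ℝ) (i j : Fin m),
      ∑ k : Fin m, Ginv v i k * G v k j = if i = j then 1 else 0)
    (v : ℝ) :
    ∑ i : Fin m, Mf2 G Ginv v i i
      = -(∑ i : Fin m, ∑ j : Fin m, ∑ k : Fin m, ∑ l : Fin m,
            Ginv v i j * Gd G v j k * Ginv v k l * Gd G v l i)
        + ∑ i : Fin m, ∑ k : Fin m, Ginv v i k * Gd2 G v k i := by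
  simp only [Mf2_eq G Ginv hGs hGi v, Finset.sum_add_distrib]
  congr 1
  simp only [deriv_Ginv G Ginv hGs hGi hGinv hGinv' v, neg_mul, Finset.sum_mul,
    Finset.sum_neg_distrib, neg_neg]
  rw [neg_eq_iff_eq_neg, neg_neg]
  refine Finset.sum_congr rfl fun i _ => ?_
  rw [← sum3_inner_out (fun a b k => Ginv v i a * Gd G v a b * Ginv v b k * Gd G v k i)]

end Final2
end RW

/-- for the Rosen-form plane-wave metric,
`R_{11} = −(1/2) Tr(G⁻¹ G'') + (1/4) Tr((G⁻¹ G')²)`; in particular the vacuum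
Einstein equations reduce to the single condition
`−(1/2) Tr(G⁻¹ G'') + (1/4) Tr((G⁻¹ G')²) = 0`. -/
theorem stmt17 (m : ℕ) (hm : 1 ≤ m) (G Ginv : ℝ → Fin m → Fin m → ℝ)
    (hGsmooth : ∀ i j : Fin m, ContDiff ℝ (⊤ : ℕ∞) (fun v => G v i j))
    (hGsymm : ∀ (v : ℝ) (i j : Fin m), G v i j = G v j i)
    (hGinv : ∀ (v : ℝ) (i j : Fin m),
      ∑ k : Fin m, G v i k * Ginv v k j = if i = j then 1 else 0)
    (hGinv' : ∀ (v : ℝ) (i j : Fin m),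
      ∑ k : Fin m, Ginv v i k * G v k j = if i = j then 1 else 0) :
    (∀ p : Fin (m + 2) → ℝ,
      ricciR m G Ginv p 1 1 =
        -(1 / 2) * (∑ i : Fin m, ∑ j : Fin m,
            Ginv (p 1) i j * deriv (deriv (fun v => G v j i)) (p 1))
          + (1 / 4) * (∑ i : Fin m, ∑ j : Fin m, ∑ k : Fin m, ∑ l : Fin m,
            Ginv (p 1) i j * deriv (fun v => G v j k) (p 1)
              * Ginv (p 1) k l * deriv (fun v => G v l i) (p 1)))
    ∧ ((∀ (p : Fin (m + 2) → ℝ) (β δ : Fin (m + 2)), ricciR m G Ginv p β δ = 0)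
      ↔ (∀ v : ℝ,
          -(1 / 2) * (∑ i : Fin m, ∑ j : Fin m,
              Ginv v i j * deriv (deriv (fun w => G w j i)) v)
            + (1 / 4) * (∑ i : Fin m, ∑ j : Fin m, ∑ k : Fin m, ∑ l : Fin m,
              Ginv v i j * deriv (fun w => G w j k) v
                * Ginv v k l * deriv (fun w => G w l i) v) = 0)) := by
  classical
  have hGi_top : ∀ i j : Fin m, ContDiff ℝ (⊤ : ℕ∞) fun v => Ginv v i j :=
    RW.Ginv_smooth G Ginv hGsmooth hGinv
  have hric := RW.ricci_eq G Ginv hGsmooth hGi_top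
  have hE : ∀ v : ℝ,
      -(1/2) * (∑ i : Fin m, RW.Mf2 G Ginv v i i)
        - (1/4) * (∑ i : Fin m, ∑ j : Fin m, RW.Mf G Ginv v i j * RW.Mf G Ginv v j i)
      = -(1 / 2) * (∑ i : Fin m, ∑ j : Fin m,
            Ginv v i j * deriv (deriv (fun w => G w j i)) v)
          + (1 / 4) * (∑ i : Fin m, ∑ j : Fin m, ∑ k : Fin m, ∑ l : Fin m,
            Ginv v i j * deriv (fun w => G w j k) v
              * Ginv v k l * deriv (fun w => G w l i) v) := by
    intro v
    rw [RW.trM2_eq G Ginv hGsmooth hGi_top hGinv hGinv' v, RW.trMsq_expand G Ginv v]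
    have hG2 : ∀ k i : Fin m, RW.Gd2 G v k i = deriv (deriv (fun w => G w k i)) v :=
      fun _ _ => rfl
    have hG1 : ∀ k i : Fin m, RW.Gd G v k i = deriv (fun w => G w k i) v :=
      fun _ _ => rfl
    simp only [hG2, hG1]
    ring
  have part1 : ∀ p : Fin (m + 2) → ℝ,
      ricciR m G Ginv p 1 1 =
        -(1 / 2) * (∑ i : Fin m, ∑ j : Fin m,
            Ginv (p 1) i j * deriv (deriv (fun v => G v j i)) (p 1))
          + (1 / 4) * (∑ i : Fin m, ∑ j : Fin m, ∑ k : Fin m, ∑ l : Fin m,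
            Ginv (p 1) i j * deriv (fun v => G v j k) (p 1)
              * Ginv (p 1) k l * deriv (fun v => G v l i) (p 1)) := by
    intro p
    rw [hric p 1 1, if_pos ⟨rfl, rfl⟩]
    exact hE (p 1)
  refine ⟨part1, ?_, ?_⟩
  · intro h v
    have h1 := h (fun _ : Fin (m + 2) => v) 1 1
    rw [part1 (fun _ : Fin (m + 2) => v)] at h1
    exact h1
  · intro h p β δ
    rw [hric p β δ]
    split_ifs with hc
    · exact (hE (p 1)).trans (h (p 1))
    · rfl
end
end

section
/- Suppose the transverse metric of the Rosen-form plane-wave metric is written as G(v) = e(v)ᵀ e(v) for a smooth map e : ℝ → GL(m, ℝ), and let S(v) denote the symmetric part of the matrix e'(v) e(v)^{-1}, i.e. S = (1/2)(e' e^{-1} + (e' e^{-1})ᵀ). Then the vv-component of the Ricci tensor equals R_{11} = −Tr(S'(v) + S(v)²) at every point; in particular the Rosen-form metric is Ricci flat if and only if Tr(S' + S²) = 0 for all v, a single scalar ODE condition on the matrix S. -/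
noncomputable section

-- Auxiliary development
-- Fin facts
lemma tIdx_ne_zero {m : ℕ} (i : Fin m) : tIdx i ≠ 0 := by
  simp [tIdx, Fin.ext_iff, Fin.val_succ]

lemma tIdx_ne_one {m : ℕ} (i : Fin m) : tIdx i ≠ 1 := by
  intro h
  have := congrArg Fin.val h
  simp only [tIdx, Fin.val_succ, Fin.val_one] at this
  omega

lemma tIdx_inj {m : ℕ} {i j : Fin m} (h : tIdx i = tIdx j) : i = j := by
  simpa [tIdx, Fin.ext_iff] using h

lemma one_ne_zero_fin {m : ℕ} : (1 : Fin (m+2)) ≠ 0 := by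
  simp [Fin.ext_iff]

-- sum split
lemma sum_fin_split {m : ℕ} (f : Fin (m+2) → ℝ) :
    ∑ α : Fin (m+2), f α = f 0 + f 1 + ∑ i : Fin m, f (tIdx i) := by
  rw [Fin.sum_univ_succ, Fin.sum_univ_succ]
  have h1 : (Fin.succ 0 : Fin (m+2)) = 1 := rfl
  simp [tIdx, h1, add_assoc]

-- pd lemmas
lemma pd_comp1 {m : ℕ} (F : ℝ → ℝ) (p : Fin (m+2) → ℝ) (hF : DifferentiableAt ℝ F (p 1))
    (μ : Fin (m+2)) :
    pd μ (fun q => F (q 1)) p = if μ = 1 then deriv F (p 1) else 0 := by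
  have hproj : (fun q : Fin (m+2) → ℝ => F (q 1)) =
      F ∘ (ContinuousLinearMap.proj (R := ℝ) (φ := fun _ : Fin (m+2) => ℝ) 1) := rfl
  unfold pd
  rw [hproj, fderiv_comp (𝕜 := ℝ) p hF (ContinuousLinearMap.differentiableAt _)]
  rw [ContinuousLinearMap.fderiv]
  simp only [ContinuousLinearMap.coe_comp', Function.comp_apply,
    ContinuousLinearMap.proj_apply]
  rw [Pi.single_apply]
  by_cases h : μ = 1
  · subst h; rw [if_pos rfl, if_pos rfl]; rfl
  · rw [if_neg (fun hh => h hh.symm), if_neg h, map_zero]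

lemma pd_const {m : ℕ} (c : ℝ) (μ : Fin (m+2)) (p : Fin (m+2) → ℝ) :
    pd μ (fun _ => c) p = 0 := by
  unfold pd; simp


-- v-dependent metric components
def vlow (m : ℕ) (G : ℝ → Fin m → Fin m → ℝ) (v : ℝ) (α β : Fin (m + 2)) : ℝ :=
  (if (α = 0 ∧ β = 1) ∨ (α = 1 ∧ β = 0) then 1 else 0)
    + ∑ i : Fin m, ∑ j : Fin m, if α = tIdx i ∧ β = tIdx j then G v i j else 0

def vup (m : ℕ) (Ginv : ℝ → Fin m → Fin m → ℝ) (v : ℝ) (α β : Fin (m + 2)) : ℝ :=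
  (if (α = 0 ∧ β = 1) ∨ (α = 1 ∧ β = 0) then 1 else 0)
    + ∑ i : Fin m, ∑ j : Fin m, if α = tIdx i ∧ β = tIdx j then Ginv v i j else 0

lemma gLowR_eq (m : ℕ) (G : ℝ → Fin m → Fin m → ℝ) (p : Fin (m+2) → ℝ) (α β : Fin (m+2)) :
    gLowR m G p α β = vlow m G (p 1) α β := rfl

lemma gUpR_eq (m : ℕ) (Ginv : ℝ → Fin m → Fin m → ℝ) (p : Fin (m+2) → ℝ) (α β : Fin (m+2)) :
    gUpR m Ginv p α β = vup m Ginv (p 1) α β := rfl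

section vupvals
variable {m : ℕ} (Ginv : ℝ → Fin m → Fin m → ℝ) (v : ℝ)

lemma vup_right_one (α : Fin (m+2)) : vup m Ginv v α 1 = if α = 0 then 1 else 0 := by
  unfold vup
  have h1 : ∀ j : Fin m, ((1 : Fin (m+2)) = tIdx j) = False := by
    intro j; simp [(tIdx_ne_one j).symm]
  simp only [h1, and_false, if_false, Finset.sum_const_zero, add_zero]
  congr 1
  simp [one_ne_zero_fin, @eq_comm (Fin (m+2)) 1 0]

lemma vup_right_zero (α : Fin (m+2)) : vup m Ginv v α 0 = if α = 1 then 1 else 0 := by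
  unfold vup
  have h1 : ∀ j : Fin m, ((0 : Fin (m+2)) = tIdx j) = False := by
    intro j; simp [(tIdx_ne_zero j).symm]
  simp only [h1, and_false, if_false, Finset.sum_const_zero, add_zero]
  congr 1
  simp [one_ne_zero_fin]

lemma vup_zero_left (β : Fin (m+2)) : vup m Ginv v 0 β = if β = 1 then 1 else 0 := by
  unfold vup
  have h1 : ∀ i : Fin m, ((0 : Fin (m+2)) = tIdx i) = False := by
    intro i; simp [(tIdx_ne_zero i).symm]
  simp only [h1, false_and, if_false, Finset.sum_const_zero, add_zero]
  simp [one_ne_zero_fin]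

lemma vup_one_left (β : Fin (m+2)) : vup m Ginv v 1 β = if β = 0 then 1 else 0 := by
  unfold vup
  have h1 : ∀ i : Fin m, ((1 : Fin (m+2)) = tIdx i) = False := by
    intro i; simp [(tIdx_ne_one i).symm]
  simp only [h1, false_and, if_false, Finset.sum_const_zero, add_zero]
  simp [one_ne_zero_fin]

lemma vup_t_t (i k : Fin m) : vup m Ginv v (tIdx i) (tIdx k) = Ginv v i k := by
  unfold vup
  have h0 : ¬((tIdx i = 0 ∧ tIdx k = 1) ∨ (tIdx i = 1 ∧ tIdx k = 0)) := by
    simp [tIdx_ne_zero, tIdx_ne_one]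
  rw [if_neg h0, zero_add]
  have : ∀ a : Fin m, ∀ b : Fin m, (tIdx i = tIdx a ∧ tIdx k = tIdx b) = (a = i ∧ b = k) := by
    intro a b
    simp only [eq_iff_iff]
    constructor
    · rintro ⟨h1, h2⟩; exact ⟨(tIdx_inj h1).symm, (tIdx_inj h2).symm⟩
    · rintro ⟨h1, h2⟩; subst h1; subst h2; exact ⟨rfl, rfl⟩
  simp only [this]
  rw [Finset.sum_eq_single i]
  · rw [Finset.sum_eq_single k] <;> simp +contextual
  · intro b _ hb; simp [hb]
  · simp

end vupvals

-- differentiability of entry-type functions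
lemma diff_ite_entry {m : ℕ} (G : ℝ → Fin m → Fin m → ℝ)
    (hGd : ∀ i j, Differentiable ℝ (fun w => G w i j)) (P : Prop) [Decidable P] (i j : Fin m) :
    Differentiable ℝ (fun w => if P then G w i j else 0) := by
  by_cases h : P
  · simpa [h] using hGd i j
  · simpa [h] using (differentiable_const (0:ℝ))

lemma vlow_diff {m : ℕ} (G : ℝ → Fin m → Fin m → ℝ)
    (hGd : ∀ i j, Differentiable ℝ (fun w => G w i j)) (α β : Fin (m+2)) :
    Differentiable ℝ (fun v => vlow m G v α β) := by
  unfold vlow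
  apply Differentiable.add (differentiable_const _)
  apply Differentiable.fun_sum; intro i _
  apply Differentiable.fun_sum; intro j _
  exact diff_ite_entry G hGd _ i j

lemma vup_diff {m : ℕ} (Ginv : ℝ → Fin m → Fin m → ℝ)
    (hGd : ∀ i j, Differentiable ℝ (fun w => Ginv w i j)) (α β : Fin (m+2)) :
    Differentiable ℝ (fun v => vup m Ginv v α β) := by
  unfold vup
  apply Differentiable.add (differentiable_const _)
  apply Differentiable.fun_sum; intro i _
  apply Differentiable.fun_sum; intro j _
  exact diff_ite_entry Ginv hGd _ i j

-- the v-derivative of the transverse metric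
def Amat {m : ℕ} (G : ℝ → Fin m → Fin m → ℝ) (v : ℝ) (i j : Fin m) : ℝ :=
  deriv (fun w => G w i j) v

def Dg (m : ℕ) (G : ℝ → Fin m → Fin m → ℝ) (v : ℝ) (α β : Fin (m+2)) : ℝ :=
  deriv (fun w => vlow m G w α β) v

lemma Dg_eq {m : ℕ} (G : ℝ → Fin m → Fin m → ℝ)
    (hGd : ∀ i j, Differentiable ℝ (fun w => G w i j)) (v : ℝ) (α β : Fin (m+2)) :
    Dg m G v α β
      = ∑ i : Fin m, ∑ j : Fin m, if α = tIdx i ∧ β = tIdx j then Amat G v i j else 0 := by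
  unfold Dg vlow
  rw [deriv_const_add]
  rw [deriv_fun_sum]
  · apply Finset.sum_congr rfl; intro i _
    rw [deriv_fun_sum]
    · apply Finset.sum_congr rfl; intro j _
      by_cases h : α = tIdx i ∧ β = tIdx j
      · simp only [h, if_true]; rfl
      · simp only [h, if_false]; exact deriv_const v 0
    · intro j _; exact (diff_ite_entry G hGd _ i j).differentiableAt
  · intro i _
    apply DifferentiableAt.fun_sum; intro j _
    exact (diff_ite_entry G hGd _ i j).differentiableAt

section Dgvals
variable {m : ℕ} (G : ℝ → Fin m → Fin m → ℝ)
  (hGd : ∀ i j, Differentiable ℝ (fun w => G w i j)) (v : ℝ)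
include hGd

lemma Dg_zero_left (β : Fin (m+2)) : Dg m G v 0 β = 0 := by
  rw [Dg_eq G hGd]
  apply Finset.sum_eq_zero; intro i _
  apply Finset.sum_eq_zero; intro j _
  simp [(tIdx_ne_zero i).symm]

lemma Dg_one_left (β : Fin (m+2)) : Dg m G v 1 β = 0 := by
  rw [Dg_eq G hGd]
  apply Finset.sum_eq_zero; intro i _
  apply Finset.sum_eq_zero; intro j _
  simp [(tIdx_ne_one i).symm]

lemma Dg_zero_right (α : Fin (m+2)) : Dg m G v α 0 = 0 := by
  rw [Dg_eq G hGd]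
  apply Finset.sum_eq_zero; intro i _
  apply Finset.sum_eq_zero; intro j _
  simp [(tIdx_ne_zero j).symm]

lemma Dg_one_right (α : Fin (m+2)) : Dg m G v α 1 = 0 := by
  rw [Dg_eq G hGd]
  apply Finset.sum_eq_zero; intro i _
  apply Finset.sum_eq_zero; intro j _
  simp [(tIdx_ne_one j).symm]

lemma Dg_t_t (i j : Fin m) : Dg m G v (tIdx i) (tIdx j) = Amat G v i j := by
  rw [Dg_eq G hGd]
  have : ∀ a : Fin m, ∀ b : Fin m,
      (tIdx i = tIdx a ∧ tIdx j = tIdx b) = (a = i ∧ b = j) := by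
    intro a b
    simp only [eq_iff_iff]
    constructor
    · rintro ⟨h1, h2⟩; exact ⟨(tIdx_inj h1).symm, (tIdx_inj h2).symm⟩
    · rintro ⟨h1, h2⟩; subst h1; subst h2; exact ⟨rfl, rfl⟩
  simp only [this]
  rw [Finset.sum_eq_single i]
  · rw [Finset.sum_eq_single j] <;> simp +contextual
  · intro b _ hb; simp [hb]
  · simp

end Dgvals

-- the matrix E = G⁻¹ G' spread over all indices, and the reduced Christoffel symbols
def Ev (m : ℕ) (G Ginv : ℝ → Fin m → Fin m → ℝ) (v : ℝ) (α β : Fin (m+2)) : ℝ :=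
  ∑ δ : Fin (m+2), vup m Ginv v α δ * Dg m G v δ β

def chr1 (m : ℕ) (G Ginv : ℝ → Fin m → Fin m → ℝ) (v : ℝ) (α β γ : Fin (m+2)) : ℝ :=
  (1 / 2) * ∑ δ : Fin (m+2), vup m Ginv v α δ *
    ((if β = 1 then Dg m G v δ γ else 0) + (if γ = 1 then Dg m G v δ β else 0)
      - (if δ = 1 then Dg m G v β γ else 0))

lemma chrR_eq_chr1 {m : ℕ} (G Ginv : ℝ → Fin m → Fin m → ℝ)
    (hGd : ∀ i j, Differentiable ℝ (fun w => G w i j))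
    (p : Fin (m+2) → ℝ) (α β γ : Fin (m+2)) :
    chrR m G Ginv p α β γ = chr1 m G Ginv (p 1) α β γ := by
  unfold chrR chr1
  congr 1
  apply Finset.sum_congr rfl; intro δ _
  rw [gUpR_eq]
  congr 1
  have hlow : ∀ a b : Fin (m+2), (fun q : Fin (m+2) → ℝ => gLowR m G q a b)
      = (fun q => vlow m G (q 1) a b) := fun a b => rfl
  rw [hlow δ γ, hlow δ β, hlow β γ,
    pd_comp1 _ _ ((vlow_diff G hGd δ γ) (p 1)),
    pd_comp1 _ _ ((vlow_diff G hGd δ β) (p 1)),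
    pd_comp1 _ _ ((vlow_diff G hGd β γ) (p 1))]
  rfl

lemma sum_ite_pick {n : ℕ} (b : Fin n) (f : Fin n → ℝ) :
    ∑ δ : Fin n, (if δ = b then f δ else 0) = f b := by
  simp [Finset.sum_ite_eq']

section chr1vals
variable {m : ℕ} (G Ginv : ℝ → Fin m → Fin m → ℝ)
  (hGd : ∀ i j, Differentiable ℝ (fun w => G w i j)) (v : ℝ)
include hGd

lemma chr1_formula (α β γ : Fin (m+2)) :
    chr1 m G Ginv v α β γ = (1/2) * ((if β = 1 then Ev m G Ginv v α γ else 0)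
      + (if γ = 1 then Ev m G Ginv v α β else 0) - (if α = 0 then Dg m G v β γ else 0)) := by
  unfold chr1 Ev
  congr 1
  simp only [mul_add, mul_sub, Finset.sum_add_distrib, Finset.sum_sub_distrib]
  congr 1
  · congr 1
    · by_cases hβ : β = 1
      · simp only [hβ, if_true]
      · simp [hβ]
    · by_cases hγ : γ = 1
      · simp only [hγ, if_true]
      · simp [hγ]
  · have : ∀ δ : Fin (m+2), vup m Ginv v α δ * (if δ = 1 then Dg m G v β γ else 0)
        = if δ = 1 then vup m Ginv v α δ * Dg m G v β γ else 0 := by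
      intro δ; by_cases h : δ = 1 <;> simp [h]
    rw [Finset.sum_congr rfl (fun δ _ => this δ), sum_ite_pick]
    rw [vup_right_one]
    by_cases h : α = 0 <;> simp [h]

lemma Ev_zero_left (β : Fin (m+2)) : Ev m G Ginv v 0 β = 0 := by
  unfold Ev
  have : ∀ δ : Fin (m+2), vup m Ginv v 0 δ * Dg m G v δ β
      = if δ = 1 then Dg m G v δ β else 0 := by
    intro δ; rw [vup_zero_left]; by_cases h : δ = 1 <;> simp [h]
  rw [Finset.sum_congr rfl (fun δ _ => this δ), sum_ite_pick]
  exact Dg_one_left G hGd v β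

lemma Ev_one_left (β : Fin (m+2)) : Ev m G Ginv v 1 β = 0 := by
  unfold Ev
  have : ∀ δ : Fin (m+2), vup m Ginv v 1 δ * Dg m G v δ β
      = if δ = 0 then Dg m G v δ β else 0 := by
    intro δ; rw [vup_one_left]; by_cases h : δ = 0 <;> simp [h]
  rw [Finset.sum_congr rfl (fun δ _ => this δ), sum_ite_pick]
  exact Dg_zero_left G hGd v β

lemma Ev_zero_right (α : Fin (m+2)) : Ev m G Ginv v α 0 = 0 := by
  unfold Ev
  apply Finset.sum_eq_zero; intro δ _
  rw [Dg_zero_right G hGd, mul_zero]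

lemma Ev_one_right (α : Fin (m+2)) : Ev m G Ginv v α 1 = 0 := by
  unfold Ev
  apply Finset.sum_eq_zero; intro δ _
  rw [Dg_one_right G hGd, mul_zero]

lemma Ev_t_t (i j : Fin m) :
    Ev m G Ginv v (tIdx i) (tIdx j) = ∑ k : Fin m, Ginv v i k * Amat G v k j := by
  unfold Ev
  rw [sum_fin_split]
  rw [Dg_zero_left G hGd, Dg_one_left G hGd, mul_zero, mul_zero, zero_add, zero_add]
  apply Finset.sum_congr rfl; intro k _
  rw [vup_t_t, Dg_t_t G hGd]

lemma chr1_one_left (β γ : Fin (m+2)) : chr1 m G Ginv v 1 β γ = 0 := by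
  rw [chr1_formula G Ginv hGd]
  rw [Ev_one_left G Ginv hGd, Ev_one_left G Ginv hGd]
  simp [one_ne_zero_fin]

lemma sum_chr1_diag (β : Fin (m+2)) :
    ∑ α : Fin (m+2), chr1 m G Ginv v α α β
      = if β = 1 then (1/2) * ∑ α : Fin (m+2), Ev m G Ginv v α α else 0 := by
  rw [Finset.sum_congr rfl (fun α _ => chr1_formula G Ginv hGd v α α β)]
  rw [← Finset.mul_sum]
  simp only [Finset.sum_add_distrib, Finset.sum_sub_distrib]
  rw [sum_ite_pick 1 (fun α => Ev m G Ginv v α β)]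
  rw [Ev_one_left G Ginv hGd]
  have h3 : ∑ α : Fin (m+2), (if α = 0 then Dg m G v α β else 0) = Dg m G v 0 β :=
    sum_ite_pick 0 _
  rw [h3, Dg_zero_left G hGd]
  by_cases hβ : β = 1
  · simp [hβ, Finset.mul_sum]
  · simp [hβ]

end chr1vals

lemma diff_ite {P : Prop} [Decidable P] {f : ℝ → ℝ} (hf : Differentiable ℝ f) :
    Differentiable ℝ (fun v => if P then f v else 0) := by
  by_cases h : P
  · simpa [h] using hf
  · simpa [h] using (differentiable_const (0:ℝ))

section diffs
variable {m : ℕ} (G Ginv : ℝ → Fin m → Fin m → ℝ)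
  (hGd : ∀ i j, Differentiable ℝ (fun w => G w i j))
  (hGinvd : ∀ i j, Differentiable ℝ (fun w => Ginv w i j))
  (hA : ∀ i j, Differentiable ℝ (fun v => Amat G v i j))

include hGd hA in
lemma Dg_diff (α β : Fin (m+2)) : Differentiable ℝ (fun v => Dg m G v α β) := by
  have h : (fun v => Dg m G v α β)
      = fun v => ∑ i : Fin m, ∑ j : Fin m,
          if α = tIdx i ∧ β = tIdx j then Amat G v i j else 0 :=
    funext (fun v => Dg_eq G hGd v α β)
  rw [h]
  apply Differentiable.fun_sum; intro i _
  apply Differentiable.fun_sum; intro j _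
  exact diff_ite (hA i j)

include hGd hGinvd hA in
lemma Ev_diff (α β : Fin (m+2)) : Differentiable ℝ (fun v => Ev m G Ginv v α β) := by
  unfold Ev
  apply Differentiable.fun_sum; intro δ _
  exact (vup_diff Ginv hGinvd α δ).mul (Dg_diff G hGd hA δ β)

include hGd hGinvd hA in
lemma chr1_diff (α β γ : Fin (m+2)) :
    Differentiable ℝ (fun v => chr1 m G Ginv v α β γ) := by
  unfold chr1
  apply Differentiable.const_mul
  apply Differentiable.fun_sum; intro δ _
  apply Differentiable.mul (vup_diff Ginv hGinvd α δ)
  exact ((diff_ite (Dg_diff G hGd hA δ γ)).add (diff_ite (Dg_diff G hGd hA δ β))).sub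
    (diff_ite (Dg_diff G hGd hA β γ))

include hGd hGinvd hA in
lemma trE_diff : Differentiable ℝ (fun v => ∑ α : Fin (m+2), Ev m G Ginv v α α) := by
  apply Differentiable.fun_sum; intro α _
  exact Ev_diff G Ginv hGd hGinvd hA α α

end diffs

lemma sum_ite_all {n : ℕ} (c : Prop) [Decidable c] (f : Fin n → ℝ) :
    ∑ x : Fin n, (if c then f x else 0) = if c then ∑ x : Fin n, f x else 0 := by
  by_cases h : c <;> simp [h]

section quad
variable {m : ℕ} (G Ginv : ℝ → Fin m → Fin m → ℝ)
  (hGd : ∀ i j, Differentiable ℝ (fun w => G w i j)) (v : ℝ)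
include hGd

lemma quad_first (β δ : Fin (m+2)) :
    ∑ α : Fin (m+2), ∑ ε : Fin (m+2), chr1 m G Ginv v α α ε * chr1 m G Ginv v ε δ β = 0 := by
  rw [Finset.sum_comm]
  have h1 : ∀ ε : Fin (m+2),
      ∑ α : Fin (m+2), chr1 m G Ginv v α α ε * chr1 m G Ginv v ε δ β
        = (if ε = 1 then (1/2) * ∑ α : Fin (m+2), Ev m G Ginv v α α else 0)
            * chr1 m G Ginv v ε δ β := by
    intro ε
    rw [← Finset.sum_mul, sum_chr1_diag G Ginv hGd]
  rw [Finset.sum_congr rfl (fun ε _ => h1 ε)]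
  have h2 : ∀ ε : Fin (m+2),
      (if ε = 1 then (1/2) * ∑ α : Fin (m+2), Ev m G Ginv v α α else 0)
          * chr1 m G Ginv v ε δ β
        = if ε = 1 then ((1/2) * ∑ α : Fin (m+2), Ev m G Ginv v α α)
            * chr1 m G Ginv v ε δ β else 0 := by
    intro ε; by_cases h : ε = 1 <;> simp [h]
  rw [Finset.sum_congr rfl (fun ε _ => h2 ε), sum_ite_pick]
  rw [chr1_one_left G Ginv hGd, mul_zero]

lemma quad_second (β δ : Fin (m+2)) :
    ∑ α : Fin (m+2), ∑ ε : Fin (m+2), chr1 m G Ginv v α δ ε * chr1 m G Ginv v ε α β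
      = if β = 1 ∧ δ = 1
          then (1/4) * ∑ α : Fin (m+2), ∑ ε : Fin (m+2),
            Ev m G Ginv v α ε * Ev m G Ginv v ε α
          else 0 := by
  by_cases hδ : δ = 1 <;> by_cases hβ : β = 1
  · -- both 1
    subst hδ; subst hβ
    rw [if_pos ⟨rfl, rfl⟩, Finset.mul_sum]
    apply Finset.sum_congr rfl; intro α _
    rw [Finset.mul_sum]
    apply Finset.sum_congr rfl; intro ε _
    rw [chr1_formula G Ginv hGd, chr1_formula G Ginv hGd]
    rw [Ev_one_right G Ginv hGd, Ev_one_right G Ginv hGd,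
      Dg_one_left G hGd, Dg_one_right G hGd]
    simp only [eq_self_iff_true, if_true, ite_self, sub_zero, add_zero]
    ring
  · -- δ = 1, β ≠ 1
    subst hδ
    rw [if_neg (by tauto)]
    have split : ∀ α ε : Fin (m+2), chr1 m G Ginv v α 1 ε * chr1 m G Ginv v ε α β
        = (if α = 1 then (1/4) * (Ev m G Ginv v α ε * Ev m G Ginv v ε β) else 0)
          - (if ε = 0 then (1/4) * (Ev m G Ginv v α ε * Dg m G v α β) else 0) := by
      intro α ε
      rw [chr1_formula G Ginv hGd, chr1_formula G Ginv hGd]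
      rw [Ev_one_right G Ginv hGd, Dg_one_left G hGd]
      simp only [eq_self_iff_true, if_true, ite_self, sub_zero, add_zero, if_neg hβ]
      by_cases h1 : α = 1 <;> by_cases h3 : ε = 0 <;> simp [h1, h3] <;> ring
    rw [Finset.sum_congr rfl fun α _ => Finset.sum_congr rfl fun ε _ => split α ε]
    have per : ∀ α : Fin (m+2), ∑ ε : Fin (m+2),
        ((if α = 1 then (1/4) * (Ev m G Ginv v α ε * Ev m G Ginv v ε β) else 0)
          - (if ε = 0 then (1/4) * (Ev m G Ginv v α ε * Dg m G v α β) else 0))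
        = if α = 1 then ∑ ε : Fin (m+2),
            (1/4) * (Ev m G Ginv v α ε * Ev m G Ginv v ε β) else 0 := by
      intro α
      rw [Finset.sum_sub_distrib, sum_ite_all, sum_ite_pick 0
        (fun ε => (1/4) * (Ev m G Ginv v α ε * Dg m G v α β))]
      rw [Ev_zero_right G Ginv hGd v α]
      simp
    rw [Finset.sum_congr rfl fun α _ => per α, sum_ite_pick]
    apply Finset.sum_eq_zero; intro ε _
    rw [Ev_one_left G Ginv hGd]
    simp
  · -- δ ≠ 1, β = 1
    subst hβ
    rw [if_neg (by tauto)]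
    have split : ∀ α ε : Fin (m+2), chr1 m G Ginv v α δ ε * chr1 m G Ginv v ε α 1
        = (if ε = 1 then (1/4) * (Ev m G Ginv v α δ * Ev m G Ginv v ε α) else 0)
          - (if α = 0 then (1/4) * (Dg m G v δ ε * Ev m G Ginv v ε α) else 0) := by
      intro α ε
      rw [chr1_formula G Ginv hGd, chr1_formula G Ginv hGd]
      rw [Ev_one_right G Ginv hGd, Dg_one_right G hGd]
      simp only [eq_self_iff_true, if_true, ite_self, sub_zero, add_zero, if_neg hδ, zero_add]
      by_cases h1 : ε = 1 <;> by_cases h3 : α = 0 <;> simp [h1, h3] <;> ring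
    rw [Finset.sum_congr rfl fun α _ => Finset.sum_congr rfl fun ε _ => split α ε]
    have per : ∀ α : Fin (m+2), ∑ ε : Fin (m+2),
        ((if ε = 1 then (1/4) * (Ev m G Ginv v α δ * Ev m G Ginv v ε α) else 0)
          - (if α = 0 then (1/4) * (Dg m G v δ ε * Ev m G Ginv v ε α) else 0))
        = - (if α = 0 then ∑ ε : Fin (m+2),
            (1/4) * (Dg m G v δ ε * Ev m G Ginv v ε α) else 0) := by
      intro α
      rw [Finset.sum_sub_distrib, sum_ite_all, sum_ite_pick]
      rw [Ev_one_left G Ginv hGd]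
      simp
    rw [Finset.sum_congr rfl fun α _ => per α]
    simp only [Finset.sum_neg_distrib, sum_ite_all]
    rw [sum_ite_pick]
    have : ∀ ε : Fin (m+2), (1/4) * (Dg m G v δ ε * Ev m G Ginv v ε 0) = 0 := by
      intro ε; rw [Ev_zero_right G Ginv hGd]; ring
    rw [Finset.sum_congr rfl fun ε _ => this ε]
    simp
  · -- both ≠ 1
    rw [if_neg (by tauto)]
    have split : ∀ α ε : Fin (m+2), chr1 m G Ginv v α δ ε * chr1 m G Ginv v ε α β
        = (if ε = 1 then (if α = 1 then
              (1/4) * (Ev m G Ginv v α δ * Ev m G Ginv v ε β) else 0) else 0)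
          - (if ε = 1 then (if ε = 0 then
              (1/4) * (Ev m G Ginv v α δ * Dg m G v α β) else 0) else 0)
          - (if α = 0 then (if α = 1 then
              (1/4) * (Dg m G v δ ε * Ev m G Ginv v ε β) else 0) else 0)
          + (if α = 0 then (if ε = 0 then
              (1/4) * (Dg m G v δ ε * Dg m G v α β) else 0) else 0) := by
      intro α ε
      rw [chr1_formula G Ginv hGd, chr1_formula G Ginv hGd]
      simp only [if_neg hδ, if_neg hβ, zero_add]
      by_cases h1 : ε = 1 <;> by_cases h2 : ε = 0 <;> by_cases h3 : α = 1 <;>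
        by_cases h4 : α = 0 <;> simp [h1, h2, h3, h4] <;> ring
    rw [Finset.sum_congr rfl fun α _ => Finset.sum_congr rfl fun ε _ => split α ε]
    have per : ∀ α : Fin (m+2), ∑ ε : Fin (m+2),
        ((if ε = 1 then (if α = 1 then
              (1/4) * (Ev m G Ginv v α δ * Ev m G Ginv v ε β) else 0) else 0)
          - (if ε = 1 then (if ε = 0 then
              (1/4) * (Ev m G Ginv v α δ * Dg m G v α β) else 0) else 0)
          - (if α = 0 then (if α = 1 then
              (1/4) * (Dg m G v δ ε * Ev m G Ginv v ε β) else 0) else 0)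
          + (if α = 0 then (if ε = 0 then
              (1/4) * (Dg m G v δ ε * Dg m G v α β) else 0) else 0)) = 0 := by
      intro α
      simp only [Finset.sum_add_distrib, Finset.sum_sub_distrib, sum_ite_pick, sum_ite_all]
      rw [Ev_one_left G Ginv hGd]
      have h10 : ((1 : Fin (m+2)) = 0) = False := by simp [one_ne_zero_fin]
      have hd0 : Dg m G v δ 0 = 0 := Dg_zero_right G hGd v δ
      by_cases h4 : α = 0
      · have h01 : (α = 1) = False := by subst h4; simp [Ne.symm one_ne_zero_fin]
        simp [h4, h01, h10, hd0]
      · by_cases h3 : α = 1 <;> simp [h3, h4, h10, hd0]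
    rw [Finset.sum_congr rfl fun α _ => per α]
    simp

end quad

lemma ricci_master {m : ℕ} (G Ginv : ℝ → Fin m → Fin m → ℝ)
    (hGd : ∀ i j, Differentiable ℝ (fun w => G w i j))
    (hGinvd : ∀ i j, Differentiable ℝ (fun w => Ginv w i j))
    (hA : ∀ i j, Differentiable ℝ (fun v => Amat G v i j))
    (p : Fin (m+2) → ℝ) (β δ : Fin (m+2)) :
    ricciR m G Ginv p β δ = if β = 1 ∧ δ = 1 then
      -((1/2) * deriv (fun v => ∑ α : Fin (m+2), Ev m G Ginv v α α) (p 1)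
        + (1/4) * ∑ α : Fin (m+2), ∑ ε : Fin (m+2),
            Ev m G Ginv (p 1) α ε * Ev m G Ginv (p 1) ε α) else 0 := by
  unfold ricciR riemR
  have hc : ∀ (q : Fin (m+2) → ℝ) (a b c : Fin (m+2)),
      chrR m G Ginv q a b c = chr1 m G Ginv (q 1) a b c :=
    fun q a b c => chrR_eq_chr1 G Ginv hGd q a b c
  simp only [hc]
  have hpd : ∀ (a b c μ : Fin (m+2)), pd μ (fun q => chr1 m G Ginv (q 1) a b c) p
      = if μ = 1 then deriv (fun v => chr1 m G Ginv v a b c) (p 1) else 0 :=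
    fun a b c μ => pd_comp1 _ p ((chr1_diff G Ginv hGd hGinvd hA a b c) (p 1)) μ
  simp only [hpd]
  rw [Finset.sum_add_distrib, Finset.sum_sub_distrib]
  -- first piece
  rw [sum_ite_pick 1 (fun α => deriv (fun v => chr1 m G Ginv v α δ β) (p 1))]
  have h1 : (fun v => chr1 m G Ginv v 1 δ β) = fun _ => (0:ℝ) :=
    funext fun v => chr1_one_left G Ginv hGd v δ β
  rw [h1, deriv_const]
  -- second piece
  rw [sum_ite_all (δ = 1) (fun α => deriv (fun v => chr1 m G Ginv v α α β) (p 1))]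
  have h2 : ∑ α : Fin (m+2), deriv (fun v => chr1 m G Ginv v α α β) (p 1)
      = if β = 1 then (1/2) * deriv (fun v => ∑ α : Fin (m+2), Ev m G Ginv v α α) (p 1)
          else 0 := by
    rw [← deriv_fun_sum (fun α _ =>
      ((chr1_diff G Ginv hGd hGinvd hA α α β) (p 1)))]
    have hfun : (fun v => ∑ α : Fin (m+2), chr1 m G Ginv v α α β)
        = fun v => if β = 1 then (1/2) * ∑ α : Fin (m+2), Ev m G Ginv v α α else 0 :=
      funext fun v => sum_chr1_diag G Ginv hGd v β
    rw [hfun]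
    by_cases hβ : β = 1
    · simp only [hβ, if_true]
      rw [deriv_const_mul _ ((trE_diff G Ginv hGd hGinvd hA) (p 1))]
    · simp [hβ]
  rw [h2]
  -- quadratic piece
  have h3 : ∑ α : Fin (m+2), ∑ ε : Fin (m+2),
      (chr1 m G Ginv (p 1) α α ε * chr1 m G Ginv (p 1) ε δ β
        - chr1 m G Ginv (p 1) α δ ε * chr1 m G Ginv (p 1) ε α β)
      = - (if β = 1 ∧ δ = 1
          then (1/4) * ∑ α : Fin (m+2), ∑ ε : Fin (m+2),
            Ev m G Ginv (p 1) α ε * Ev m G Ginv (p 1) ε α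
          else 0) := by
    simp only [Finset.sum_sub_distrib]
    rw [quad_first G Ginv hGd (p 1) β δ, quad_second G Ginv hGd (p 1) β δ]
    ring
  rw [h3]
  by_cases hβ : β = 1 <;> by_cases hδ : δ = 1 <;> simp [hβ, hδ] <;> ring

section traces
variable {m : ℕ} (G Ginv : ℝ → Fin m → Fin m → ℝ)
  (hGd : ∀ i j, Differentiable ℝ (fun w => G w i j)) (v : ℝ)
include hGd

lemma trE_eq : ∑ α : Fin (m+2), Ev m G Ginv v α α
    = ∑ i : Fin m, ∑ k : Fin m, Ginv v i k * Amat G v k i := by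
  rw [sum_fin_split]
  rw [Ev_zero_left G Ginv hGd, Ev_one_left G Ginv hGd, add_zero, zero_add]
  exact Finset.sum_congr rfl fun i _ => Ev_t_t G Ginv hGd v i i

lemma trEE_eq : ∑ α : Fin (m+2), ∑ ε : Fin (m+2), Ev m G Ginv v α ε * Ev m G Ginv v ε α
    = ∑ i : Fin m, ∑ j : Fin m, (∑ k : Fin m, Ginv v i k * Amat G v k j)
        * (∑ l : Fin m, Ginv v j l * Amat G v l i) := by
  rw [sum_fin_split]
  have hz : ∀ ε : Fin (m+2), Ev m G Ginv v 0 ε * Ev m G Ginv v ε 0 = 0 := by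
    intro ε; rw [Ev_zero_left G Ginv hGd, zero_mul]
  have ho : ∀ ε : Fin (m+2), Ev m G Ginv v 1 ε * Ev m G Ginv v ε 1 = 0 := by
    intro ε; rw [Ev_one_left G Ginv hGd, zero_mul]
  rw [Finset.sum_eq_zero fun ε _ => hz ε, Finset.sum_eq_zero fun ε _ => ho ε,
    add_zero, zero_add]
  apply Finset.sum_congr rfl; intro i _
  rw [sum_fin_split]
  rw [Ev_zero_right G Ginv hGd, Ev_one_right G Ginv hGd, zero_mul, zero_mul,
    add_zero, zero_add]
  apply Finset.sum_congr rfl; intro j _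
  rw [Ev_t_t G Ginv hGd, Ev_t_t G Ginv hGd]

end traces

lemma contDiff_det {m : ℕ} (f : ℝ → Matrix (Fin m) (Fin m) ℝ)
    (hf : ∀ i j, ContDiff ℝ (⊤ : ℕ∞) fun v => f v i j) :
    ContDiff ℝ (⊤ : ℕ∞) fun v => (f v).det := by
  simp only [Matrix.det_apply']
  apply ContDiff.sum; intro σ _
  apply ContDiff.mul contDiff_const
  exact contDiff_prod fun i _ => hf (σ i) i

lemma inv_entries_contDiff {m : ℕ} (f g : ℝ → Fin m → Fin m → ℝ)
    (hf : ∀ i j, ContDiff ℝ (⊤ : ℕ∞) fun v => f v i j)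
    (hfg : ∀ (v : ℝ) (i j : Fin m), ∑ k : Fin m, f v i k * g v k j = if i = j then 1 else 0)
    (hgf : ∀ (v : ℝ) (i j : Fin m), ∑ k : Fin m, g v i k * f v k j = if i = j then 1 else 0)
    (i j : Fin m) : ContDiff ℝ (⊤ : ℕ∞) fun v => g v i j := by
  set F : ℝ → Matrix (Fin m) (Fin m) ℝ := fun v => Matrix.of (f v) with hF
  have hmul : ∀ v, F v * Matrix.of (g v) = 1 := by
    intro v; ext a b
    rw [Matrix.mul_apply, Matrix.one_apply]
    exact hfg v a b
  have hmul' : ∀ v, Matrix.of (g v) * F v = 1 := by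
    intro v; ext a b
    rw [Matrix.mul_apply, Matrix.one_apply]
    exact hgf v a b
  have hdet : ∀ v, (F v).det ≠ 0 := by
    intro v h0
    have := congrArg Matrix.det (hmul v)
    rw [Matrix.det_mul, h0, zero_mul, Matrix.det_one] at this
    exact zero_ne_one this
  have hginv : ∀ v, Matrix.of (g v) = ((F v).det)⁻¹ • (F v).adjugate := by
    intro v
    have h1 : F v * (((F v).det)⁻¹ • (F v).adjugate) = 1 := by
      rw [Matrix.mul_smul, Matrix.mul_adjugate, smul_smul,
        inv_mul_cancel₀ (hdet v), one_smul]
    calc Matrix.of (g v) = Matrix.of (g v) * (F v * (((F v).det)⁻¹ • (F v).adjugate)) := by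
          rw [h1, mul_one]
      _ = (Matrix.of (g v) * F v) * (((F v).det)⁻¹ • (F v).adjugate) := by rw [mul_assoc]
      _ = ((F v).det)⁻¹ • (F v).adjugate := by rw [hmul' v, one_mul]
  have hentry : ∀ v, g v i j = (F v).adjugate i j / (F v).det := by
    intro v
    have := congrFun (congrFun (hginv v) i) j
    simpa [div_eq_inv_mul] using this
  have : (fun v => g v i j) = fun v => (F v).adjugate i j / (F v).det :=
    funext hentry
  rw [this]
  apply ContDiff.div _ (contDiff_det F hf) hdet
  have hadj : (fun v => (F v).adjugate i j)
      = fun v => ((F v).updateRow j (Pi.single i 1)).det := by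
    funext v; rw [Matrix.adjugate_apply]
  rw [hadj]
  apply contDiff_det
  intro a b
  have : (fun v => ((F v).updateRow j (Pi.single i 1)) a b)
      = fun v => if a = j then (Pi.single i 1 : Fin m → ℝ) b else f v a b := by
    funext v; rw [Matrix.updateRow_apply]; rfl
  rw [this]
  by_cases h : a = j
  · simpa [h] using (contDiff_const : ContDiff ℝ (⊤ : ℕ∞) fun _ : ℝ => (Pi.single i 1 : Fin m → ℝ) b)
  · simpa [h] using hf a b

section matrixkey
open Matrix
variable {m : ℕ} (E F dE Gim S' : Matrix (Fin m) (Fin m) ℝ)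

lemma matrix_key (hEF : E * F = 1) (hFE : F * E = 1)
    (hGi' : Gim * (Eᵀ * E) = 1)
    (hS : S' = (1/2 : ℝ) • (dE * F + (dE * F)ᵀ)) :
    Gim * (dEᵀ * E + Eᵀ * dE) = F * ((2 : ℝ) • S') * E := by
  have hFtEt : Fᵀ * Eᵀ = 1 := by rw [← transpose_mul, hEF, transpose_one]
  have hGim : Gim = F * Fᵀ := by
    have h1 : (Eᵀ * E) * (F * Fᵀ) = 1 := by
      calc (Eᵀ * E) * (F * Fᵀ) = Eᵀ * ((E * F) * Fᵀ) := by noncomm_ring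
        _ = Eᵀ * Fᵀ := by rw [hEF, one_mul]
        _ = (F * E)ᵀ := by rw [transpose_mul]
        _ = 1 := by rw [hFE, transpose_one]
    calc Gim = Gim * ((Eᵀ * E) * (F * Fᵀ)) := by rw [h1, mul_one]
      _ = (Gim * (Eᵀ * E)) * (F * Fᵀ) := by noncomm_ring
      _ = F * Fᵀ := by rw [hGi', one_mul]
  have hdE : dE = (dE * F) * E := by rw [mul_assoc, hFE, mul_one]
  have h2S : (2 : ℝ) • S' = dE * F + (dE * F)ᵀ := by
    rw [hS, smul_smul]; norm_num
  calc Gim * (dEᵀ * E + Eᵀ * dE)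
      = F * ((Fᵀ * dEᵀ) * E) + F * ((Fᵀ * Eᵀ) * dE) := by rw [hGim]; noncomm_ring
    _ = F * ((dE * F)ᵀ * E) + F * dE := by rw [← transpose_mul, hFtEt, one_mul]
    _ = F * ((dE * F)ᵀ * E) + F * ((dE * F) * E) := by rw [← hdE]
    _ = F * (((dE * F)ᵀ + dE * F) * E) := by noncomm_ring
    _ = F * ((2 : ℝ) • S') * E := by rw [h2S]; noncomm_ring

lemma matrix_trace1 (hEF : E * F = 1) (hFE : F * E = 1)
    (hGi' : Gim * (Eᵀ * E) = 1)
    (hS : S' = (1/2 : ℝ) • (dE * F + (dE * F)ᵀ)) :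
    (Gim * (dEᵀ * E + Eᵀ * dE)).trace = 2 * S'.trace := by
  rw [matrix_key E F dE Gim S' hEF hFE hGi' hS]
  rw [trace_mul_cycle, hEF, one_mul, trace_smul]
  simp

lemma matrix_trace2 (hEF : E * F = 1) (hFE : F * E = 1)
    (hGi' : Gim * (Eᵀ * E) = 1)
    (hS : S' = (1/2 : ℝ) • (dE * F + (dE * F)ᵀ)) :
    ((Gim * (dEᵀ * E + Eᵀ * dE)) * (Gim * (dEᵀ * E + Eᵀ * dE))).trace
      = 4 * (S' * S').trace := by
  rw [matrix_key E F dE Gim S' hEF hFE hGi' hS]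
  have h : (F * ((2:ℝ) • S') * E) * (F * ((2:ℝ) • S') * E)
      = F * (((2:ℝ) • S') * ((E * F) * ((2:ℝ) • S'))) * E := by noncomm_ring
  rw [h, hEF, one_mul, trace_mul_cycle, ← mul_assoc, hEF, one_mul]
  rw [smul_mul_smul_comm, trace_smul]
  simp only [smul_eq_mul]
  ring

end matrixkey

open Matrix in
/-- writing the transverse metric as `G(v) = e(v)ᵀ e(v)` for a smooth
family of invertible matrices `e(v)`, and letting `S` be the symmetric part of
`e' e⁻¹`, the `vv`-component of the Ricci tensor is `R_{11} = −Tr(S' + S²)`; in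
particular the Rosen-form metric is Ricci flat iff `Tr(S' + S²) = 0` for all `v`. -/
theorem stmt18 (m : ℕ) (hm : 1 ≤ m) (e einv G Ginv : ℝ → Fin m → Fin m → ℝ)
    (hesmooth : ∀ i j : Fin m, ContDiff ℝ (⊤ : ℕ∞) (fun v => e v i j))
    (heinv : ∀ (v : ℝ) (i j : Fin m),
      ∑ k : Fin m, e v i k * einv v k j = if i = j then 1 else 0)
    (heinv' : ∀ (v : ℝ) (i j : Fin m),
      ∑ k : Fin m, einv v i k * e v k j = if i = j then 1 else 0)
    (hG : ∀ (v : ℝ) (i j : Fin m), G v i j = ∑ k : Fin m, e v k i * e v k j)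
    (hGinv : ∀ (v : ℝ) (i j : Fin m),
      ∑ k : Fin m, G v i k * Ginv v k j = if i = j then 1 else 0)
    (hGinv' : ∀ (v : ℝ) (i j : Fin m),
      ∑ k : Fin m, Ginv v i k * G v k j = if i = j then 1 else 0)
    (S : ℝ → Fin m → Fin m → ℝ)
    (hS : ∀ (v : ℝ) (i j : Fin m),
      S v i j = (1 / 2) *
        ((∑ k : Fin m, deriv (fun w => e w i k) v * einv v k j)
          + (∑ k : Fin m, deriv (fun w => e w j k) v * einv v k i))) :
    (∀ p : Fin (m + 2) → ℝ,
      ricciR m G Ginv p 1 1 =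
        -((∑ i : Fin m, deriv (fun w => S w i i) (p 1))
          + ∑ i : Fin m, ∑ j : Fin m, S (p 1) i j * S (p 1) j i))
    ∧ ((∀ (p : Fin (m + 2) → ℝ) (β δ : Fin (m + 2)), ricciR m G Ginv p β δ = 0)
      ↔ (∀ v : ℝ,
          (∑ i : Fin m, deriv (fun w => S w i i) v)
            + ∑ i : Fin m, ∑ j : Fin m, S v i j * S v j i = 0)) := by
  classical
  -- smoothness of everything in sight
  have hGsmooth : ∀ i j, ContDiff ℝ (⊤ : ℕ∞) (fun v => G v i j) := by
    intro i j
    have h : (fun v => G v i j) = fun v => ∑ k : Fin m, e v k i * e v k j :=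
      funext fun v => hG v i j
    rw [h]
    exact ContDiff.sum fun k _ => (hesmooth k i).mul (hesmooth k j)
  have hGd : ∀ i j, Differentiable ℝ (fun v => G v i j) :=
    fun i j => (hGsmooth i j).differentiable (by simp)
  have hGinvsmooth : ∀ i j, ContDiff ℝ (⊤ : ℕ∞) (fun v => Ginv v i j) :=
    inv_entries_contDiff G Ginv hGsmooth hGinv hGinv'
  have hGinvd : ∀ i j, Differentiable ℝ (fun v => Ginv v i j) :=
    fun i j => (hGinvsmooth i j).differentiable (by simp)
  have heinvsmooth : ∀ i j, ContDiff ℝ (⊤ : ℕ∞) (fun v => einv v i j) :=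
    inv_entries_contDiff e einv hesmooth heinv heinv'
  have hed : ∀ i j, Differentiable ℝ (fun v => e v i j) :=
    fun i j => (hesmooth i j).differentiable (by simp)
  have hded : ∀ i j, Differentiable ℝ (fun v => deriv (fun w => e w i j) v) :=
    fun i j => ((contDiff_infty_iff_deriv.mp ((hesmooth i j).of_le (by simp))).2).differentiable
      (by simp)
  have heinvd : ∀ i j, Differentiable ℝ (fun v => einv v i j) :=
    fun i j => (heinvsmooth i j).differentiable (by simp)
  -- derivative of the transverse metric
  have hAmat : ∀ (v : ℝ) (i j : Fin m), Amat G v i j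
      = ∑ k : Fin m, (deriv (fun w => e w k i) v * e v k j
          + e v k i * deriv (fun w => e w k j) v) := by
    intro v i j
    unfold Amat
    have h : (fun w => G w i j) = fun w => ∑ k : Fin m, e w k i * e w k j :=
      funext fun w => hG w i j
    rw [h, deriv_fun_sum (A := fun k w => e w k i * e w k j) (fun k _ => ((hed k i) v).mul ((hed k j) v))]
    exact Finset.sum_congr rfl fun k _ => deriv_mul ((hed k i) v) ((hed k j) v)
  have hAd : ∀ i j, Differentiable ℝ (fun v => Amat G v i j) := by
    intro i j
    have h : (fun v => Amat G v i j) = fun v => ∑ k : Fin m,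
        (deriv (fun w => e w k i) v * e v k j + e v k i * deriv (fun w => e w k j) v) :=
      funext fun v => hAmat v i j
    rw [h]
    apply Differentiable.fun_sum; intro k _
    exact ((hded k i).mul (hed k j)).add ((hed k i).mul (hded k j))
  have hSd : ∀ i j, Differentiable ℝ (fun v => S v i j) := by
    intro i j
    have h : (fun v => S v i j) = fun v => (1/2) *
        ((∑ k : Fin m, deriv (fun w => e w i k) v * einv v k j)
          + (∑ k : Fin m, deriv (fun w => e w j k) v * einv v k i)) :=
      funext fun v => hS v i j
    rw [h]
    apply Differentiable.const_mul
    exact (Differentiable.fun_sum fun k _ => (hded i k).mul (heinvd k j)).add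
      (Differentiable.fun_sum fun k _ => (hded j k).mul (heinvd k i))
  -- matrix identities
  have htr1 : ∀ v : ℝ, ∑ i : Fin m, ∑ k : Fin m, Ginv v i k * Amat G v k i
      = 2 * ∑ i : Fin m, S v i i := by
    intro v
    have key := matrix_trace1 (Matrix.of (e v)) (Matrix.of (einv v))
      (Matrix.of (fun i j => deriv (fun w => e w i j) v)) (Matrix.of (Ginv v))
      (Matrix.of (S v))
      (by ext a b; rw [Matrix.mul_apply, Matrix.one_apply]; simpa using heinv v a b)
      (by ext a b; rw [Matrix.mul_apply, Matrix.one_apply]; simpa using heinv' v a b)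
      (by
        ext a b
        rw [Matrix.mul_apply, Matrix.one_apply]
        have : ∀ k, Matrix.of (Ginv v) a k * ((Matrix.of (e v))ᵀ * Matrix.of (e v)) k b
            = Ginv v a k * G v k b := by
          intro k
          rw [Matrix.mul_apply]
          simp only [Matrix.transpose_apply, Matrix.of_apply]
          rw [hG v k b]
        rw [Finset.sum_congr rfl fun k _ => this k]
        simpa using hGinv' v a b)
      (by
        ext a b
        simp only [Matrix.smul_apply, Matrix.add_apply, Matrix.transpose_apply,
          Matrix.mul_apply, Matrix.of_apply, smul_eq_mul]
        rw [hS v a b])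
    have hX : ∀ a b : Fin m,
        ((Matrix.of (fun i j => deriv (fun w => e w i j) v))ᵀ * Matrix.of (e v)
          + (Matrix.of (e v))ᵀ * Matrix.of (fun i j => deriv (fun w => e w i j) v)) a b
        = Amat G v a b := by
      intro a b
      simp only [Matrix.add_apply, Matrix.mul_apply, Matrix.transpose_apply, Matrix.of_apply]
      rw [hAmat v a b, ← Finset.sum_add_distrib]
    calc ∑ i : Fin m, ∑ k : Fin m, Ginv v i k * Amat G v k i
        = (Matrix.of (Ginv v) * ((Matrix.of (fun i j => deriv (fun w => e w i j) v))ᵀ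
            * Matrix.of (e v) + (Matrix.of (e v))ᵀ
            * Matrix.of (fun i j => deriv (fun w => e w i j) v))).trace := by
          rw [Matrix.trace]
          apply Finset.sum_congr rfl; intro i _
          rw [Matrix.diag_apply, Matrix.mul_apply]
          apply Finset.sum_congr rfl; intro k _
          rw [hX k i]; rfl
      _ = 2 * (Matrix.of (S v)).trace := key
      _ = 2 * ∑ i : Fin m, S v i i := by rw [Matrix.trace]; rfl
  have htr2 : ∀ v : ℝ, ∑ i : Fin m, ∑ j : Fin m,
      (∑ k : Fin m, Ginv v i k * Amat G v k j) * (∑ l : Fin m, Ginv v j l * Amat G v l i)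
      = 4 * ∑ i : Fin m, ∑ j : Fin m, S v i j * S v j i := by
    intro v
    have key := matrix_trace2 (Matrix.of (e v)) (Matrix.of (einv v))
      (Matrix.of (fun i j => deriv (fun w => e w i j) v)) (Matrix.of (Ginv v))
      (Matrix.of (S v))
      (by ext a b; rw [Matrix.mul_apply, Matrix.one_apply]; simpa using heinv v a b)
      (by ext a b; rw [Matrix.mul_apply, Matrix.one_apply]; simpa using heinv' v a b)
      (by
        ext a b
        rw [Matrix.mul_apply, Matrix.one_apply]
        have : ∀ k, Matrix.of (Ginv v) a k * ((Matrix.of (e v))ᵀ * Matrix.of (e v)) k b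
            = Ginv v a k * G v k b := by
          intro k
          rw [Matrix.mul_apply]
          simp only [Matrix.transpose_apply, Matrix.of_apply]
          rw [hG v k b]
        rw [Finset.sum_congr rfl fun k _ => this k]
        simpa using hGinv' v a b)
      (by
        ext a b
        simp only [Matrix.smul_apply, Matrix.add_apply, Matrix.transpose_apply,
          Matrix.mul_apply, Matrix.of_apply, smul_eq_mul]
        rw [hS v a b])
    have hX : ∀ a b : Fin m,
        ((Matrix.of (fun i j => deriv (fun w => e w i j) v))ᵀ * Matrix.of (e v)
          + (Matrix.of (e v))ᵀ * Matrix.of (fun i j => deriv (fun w => e w i j) v)) a b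
        = Amat G v a b := by
      intro a b
      simp only [Matrix.add_apply, Matrix.mul_apply, Matrix.transpose_apply, Matrix.of_apply]
      rw [hAmat v a b, ← Finset.sum_add_distrib]
    have hQ : ∀ a b : Fin m,
        (Matrix.of (Ginv v) * ((Matrix.of (fun i j => deriv (fun w => e w i j) v))ᵀ
            * Matrix.of (e v) + (Matrix.of (e v))ᵀ
            * Matrix.of (fun i j => deriv (fun w => e w i j) v))) a b
          = ∑ k : Fin m, Ginv v a k * Amat G v k b := by
      intro a b
      rw [Matrix.mul_apply]
      apply Finset.sum_congr rfl; intro k _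
      rw [hX k b]; rfl
    calc ∑ i : Fin m, ∑ j : Fin m,
        (∑ k : Fin m, Ginv v i k * Amat G v k j) * (∑ l : Fin m, Ginv v j l * Amat G v l i)
        = ((Matrix.of (Ginv v) * ((Matrix.of (fun i j => deriv (fun w => e w i j) v))ᵀ
            * Matrix.of (e v) + (Matrix.of (e v))ᵀ
            * Matrix.of (fun i j => deriv (fun w => e w i j) v)))
          * (Matrix.of (Ginv v) * ((Matrix.of (fun i j => deriv (fun w => e w i j) v))ᵀ
            * Matrix.of (e v) + (Matrix.of (e v))ᵀ
            * Matrix.of (fun i j => deriv (fun w => e w i j) v)))).trace := by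
          rw [Matrix.trace]
          apply Finset.sum_congr rfl; intro i _
          rw [Matrix.diag_apply, Matrix.mul_apply]
          apply Finset.sum_congr rfl; intro j _
          rw [hQ i j, hQ j i]
      _ = 4 * (Matrix.of (S v) * Matrix.of (S v)).trace := key
      _ = 4 * ∑ i : Fin m, ∑ j : Fin m, S v i j * S v j i := by
          simp [Matrix.trace, Matrix.diag, Matrix.mul_apply]
  -- the master formula, in terms of S
  have hmaster : ∀ (p : Fin (m+2) → ℝ) (β δ : Fin (m+2)),
      ricciR m G Ginv p β δ = if β = 1 ∧ δ = 1 then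
        -((∑ i : Fin m, deriv (fun w => S w i i) (p 1))
          + ∑ i : Fin m, ∑ j : Fin m, S (p 1) i j * S (p 1) j i) else 0 := by
    intro p β δ
    rw [ricci_master G Ginv hGd hGinvd hAd p β δ]
    have hfun : (fun v => ∑ α : Fin (m+2), Ev m G Ginv v α α)
        = fun v => 2 * ∑ i : Fin m, S v i i := by
      funext v
      rw [trE_eq G Ginv hGd v, htr1 v]
    have hderiv : deriv (fun v => ∑ α : Fin (m+2), Ev m G Ginv v α α) (p 1)
        = 2 * ∑ i : Fin m, deriv (fun w => S w i i) (p 1) := by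
      rw [hfun, deriv_const_mul _ (DifferentiableAt.fun_sum fun i _ => (hSd i i) (p 1)),
        deriv_fun_sum (fun i _ => (hSd i i) (p 1))]
    rw [hderiv, trEE_eq G Ginv hGd (p 1), htr2 (p 1)]
    by_cases h : β = 1 ∧ δ = 1
    · rw [if_pos h, if_pos h]; ring
    · rw [if_neg h, if_neg h]
  constructor
  · intro p
    rw [hmaster p 1 1, if_pos ⟨rfl, rfl⟩]
  · constructor
    · intro h v
      have := h (fun _ => v) 1 1
      rw [hmaster (fun _ => v) 1 1, if_pos ⟨rfl, rfl⟩] at this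
      have h0 := neg_eq_zero.mp this
      simpa using h0
    · intro h p β δ
      rw [hmaster p β δ]
      by_cases hb : β = 1 ∧ δ = 1
      · rw [if_pos hb, h (p 1), neg_zero]
      · rw [if_neg hb]
end
end
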